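/- arXiv:0708.2380 — 4 statements merged into one kernel-verified Lean document; each statement's English description precedes it below -/
import Mathlib

section
/- Let G be a decomposable graph with perfect order C_1,…,C_k of its maximal cliques, and set R_1 = C_1 and R_j = C_j \ (C_1 ∪ ⋯ ∪ C_{j−1}) for j ≥ 2. Let x ∈ Q_G and let Σ be an r×r symmetric positive definite matrix with Σ⁻¹ ∈ Z_G; write σ_A = Σ_A for A ⊆ V. Then ⟨x, Σ⁻¹⟩ = tr(x_{C_1} σ_{C_1}⁻¹) + Σ_{i=2}^k [ tr(x_{[i]·} σ_{[i]·}⁻¹) + tr(Δ_iᵀ σ_{[i]·}⁻¹ Δ_i x_{S_i}) ], where for i ≥ 2: x_{[i]·} = x_{R_i} − x_{R_i,S_i} x_{S_i}⁻¹ x_{S_i,R_i}, σ_{[i]·} = σ_{R_i} − σ_{R_i,S_i} σ_{S_i}⁻¹ σ_{S_i,R_i}, and Δ_i = x_{R_i,S_i} x_{S_i}⁻¹ − σ_{R_i,S_i} σ_{S_i}⁻¹ (here m_{A,B} denotes the submatrix (m_{ab})_{a∈A,b∈B}). -/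
/-!
Write `K = Σ⁻¹` and, for `A ⊆ V`, let `K⟨A⟩` (`marginalPrecision Σ A`) be `(Σ_A)⁻¹` extended by
zero. By the Schur complement formula, `(Σ_A)⁻¹` arises from `K⟨A ∪ R⟩` by eliminating the
variables of `R`, and the fill-in this creates only joins neighbours of `R`. Hence if no entry of
`K⟨A ∪ B⟩` joins `A \ B` to `B \ A`, then `K⟨A ∪ B⟩ = K⟨A⟩ + K⟨B⟩ - K⟨A ∩ B⟩`, and the fill-in
in `K⟨A⟩` stays inside the separator `A ∩ B`. Removing the cliques one at a time from the end of a
perfect order, whose separators lie in earlier cliques, gives `K = ∑ᵢ (K⟨Cᵢ⟩ - K⟨Sᵢ⟩)`, hence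
`⟨x, K⟩ = ∑ᵢ (tr(x_{Cᵢ} σ_{Cᵢ}⁻¹) - tr(x_{Sᵢ} σ_{Sᵢ}⁻¹))`. Each difference is expanded through the
block inverse of `σ_{Cᵢ}` for `Cᵢ = Rᵢ ⊔ Sᵢ`.
-/

open Matrix

noncomputable section

/-- The linear space of symmetric `r × r` matrices vanishing off `E`. -/
def ZG (r : ℕ) (E : Finset (Fin r × Fin r)) : Set (Matrix (Fin r) (Fin r) ℝ) :=
  {y | y.IsSymm ∧ ∀ i j : Fin r, (i, j) ∉ E → y i j = 0}

/-- Rectangular submatrix `m_{A,B}` of `m`. -/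
def subAB {r : ℕ} (m : Matrix (Fin r) (Fin r) ℝ) (A B : Finset (Fin r)) :
    Matrix A B ℝ := fun i j => m i j

/-- A complete set of vertices of the graph encoded by `E`. -/
def IsCompleteSet {r : ℕ} (E : Finset (Fin r × Fin r)) (A : Finset (Fin r)) : Prop :=
  ∀ i ∈ A, ∀ j ∈ A, i ≠ j → (i, j) ∈ E

/-- A maximal clique of the graph encoded by `E`. -/
def IsMaxClique {r : ℕ} (E : Finset (Fin r × Fin r)) (A : Finset (Fin r)) : Prop :=
  IsCompleteSet E A ∧ ∀ B : Finset (Fin r), IsCompleteSet E B → A ⊆ B → A = B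

/-- The separator `S_j = C_j ∩ (C_1 ∪ ⋯ ∪ C_{j-1})`. -/
def SepG {r k : ℕ} (C : Fin k → Finset (Fin r)) (j : Fin k) : Finset (Fin r) :=
  C j ∩ (Finset.univ.filter (fun l : Fin k => l < j)).biUnion C

/-- The residual `R_j = C_j \ (C_1 ∪ ⋯ ∪ C_{j-1})`, with `R_1 = C_1`. -/
def ResG {r k : ℕ} (C : Fin k → Finset (Fin r)) (j : Fin k) : Finset (Fin r) :=
  C j \ (Finset.univ.filter (fun l : Fin k => l < j)).biUnion C

/-- `C` is a perfect order of the (maximal) cliques. -/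
def IsPerfectOrder {r k : ℕ} (C : Fin k → Finset (Fin r)) : Prop :=
  ∀ j : Fin k, (j : ℕ) ≠ 0 → ∃ l : Fin k, l < j ∧ SepG C j ⊆ C l

namespace Matrix

section Blocks

variable {m n : Type*} [Fintype m] [Fintype n] [DecidableEq m] [DecidableEq n]

theorem inv_toBlocks₁₁_inv {𝕜 : Type*} [Field 𝕜] {N : Matrix (m ⊕ n) (m ⊕ n) 𝕜}
    (hN : IsUnit N) (h₂₂ : IsUnit N.toBlocks₂₂) :
    (N⁻¹.toBlocks₁₁)⁻¹ = N.toBlocks₁₁ - N.toBlocks₁₂ * N.toBlocks₂₂⁻¹ * N.toBlocks₂₁ := by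
  obtain ⟨A, B, C, D, rfl⟩ : ∃ A B C D, N = fromBlocks A B C D :=
    ⟨_, _, _, _, (fromBlocks_toBlocks N).symm⟩
  simp only [toBlocks_fromBlocks₁₁, toBlocks_fromBlocks₁₂, toBlocks_fromBlocks₂₁,
    toBlocks_fromBlocks₂₂] at h₂₂ ⊢
  let := hN.invertible
  let := h₂₂.invertible
  let := invertibleOfFromBlocks₂₂Invertible A B C D
  rw [← invOf_eq_nonsing_inv (fromBlocks A B C D), invOf_fromBlocks₂₂_eq,
    toBlocks_fromBlocks₁₁, ← invOf_eq_nonsing_inv, invOf_invOf, invOf_eq_nonsing_inv]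

theorem PosDef.isUnit_schur {M : Matrix (m ⊕ n) (m ⊕ n) ℝ} (hM : M.PosDef) :
    IsUnit (M.toBlocks₁₁ - M.toBlocks₁₂ * M.toBlocks₂₂⁻¹ * M.toBlocks₂₁) := by
  rw [← inv_toBlocks₁₁_inv hM.isUnit (hM.submatrix Sum.inr_injective).isUnit]
  exact (hM.inv.submatrix Sum.inl_injective).inv.isUnit

variable {α : Type*} [CommRing α]

omit [DecidableEq m] [DecidableEq n] in
theorem trace_fromBlocks (A : Matrix m m α) (B : Matrix m n α) (C : Matrix n m α)
    (D : Matrix n n α) : trace (fromBlocks A B C D) = trace A + trace D := by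
  simp [trace, Fintype.sum_sum_type]

omit [DecidableEq m] [DecidableEq n] in
theorem trace_submatrix_equiv (M : Matrix n n α) (e : m ≃ n) :
    trace (M.submatrix e e) = trace M :=
  Fintype.sum_equiv e _ _ fun _ => rfl

theorem trace_fromBlocks_mul_inv_fromBlocks (xR : Matrix m m α) (xRS : Matrix m n α)
    (xS : Matrix n n α) (σR : Matrix m m α) (σRS : Matrix m n α) (σS : Matrix n n α)
    (hxS : IsUnit xS) (hσS : IsUnit σS) (hN : IsUnit (σR - σRS * σS⁻¹ * σRSᵀ))
    (hxS_symm : xSᵀ = xS) (hσS_symm : σSᵀ = σS) :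
    trace (fromBlocks xR xRS xRSᵀ xS * (fromBlocks σR σRS σRSᵀ σS)⁻¹) =
      trace (xS * σS⁻¹) + trace ((xR - xRS * xS⁻¹ * xRSᵀ) * (σR - σRS * σS⁻¹ * σRSᵀ)⁻¹) +
      trace ((xRS * xS⁻¹ - σRS * σS⁻¹)ᵀ * (σR - σRS * σS⁻¹ * σRSᵀ)⁻¹ *
        (xRS * xS⁻¹ - σRS * σS⁻¹) * xS) := by
  let := hσS.invertible
  let : Invertible (σR - σRS * ⅟σS * σRSᵀ) := by rw [invOf_eq_nonsing_inv]; exact hN.invertible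
  let := fromBlocks₂₂Invertible σR σRS σRSᵀ σS
  have hx₁ : xS * xS⁻¹ = 1 := mul_nonsing_inv _ ((isUnit_iff_isUnit_det _).1 hxS)
  have hx₂ : xS⁻¹ * xS = 1 := nonsing_inv_mul _ ((isUnit_iff_isUnit_det _).1 hxS)
  rw [← invOf_eq_nonsing_inv (fromBlocks σR σRS σRSᵀ σS), invOf_fromBlocks₂₂_eq]
  simp only [invOf_eq_nonsing_inv]
  rw [fromBlocks_multiply, trace_fromBlocks]
  set N := σR - σRS * σS⁻¹ * σRSᵀ
  have hcyc₁ : trace (xRS * (xS⁻¹ * (xRSᵀ * N⁻¹))) = trace (xS⁻¹ * (xRSᵀ * (N⁻¹ * xRS))) := by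
    rw [trace_mul_comm]; simp only [Matrix.mul_assoc]
  have hcyc₂ : trace (xS⁻¹ * (xRSᵀ * (N⁻¹ * (σRS * (σS⁻¹ * xS))))) =
      trace (xRSᵀ * (N⁻¹ * (σRS * σS⁻¹))) := by
    rw [trace_mul_comm]; simp only [Matrix.mul_assoc, hx₁, Matrix.mul_one]
  have hcyc₃ : trace (xRS * (σS⁻¹ * (σRSᵀ * N⁻¹))) = trace (σS⁻¹ * (σRSᵀ * (N⁻¹ * xRS))) := by
    rw [trace_mul_comm]; simp only [Matrix.mul_assoc]
  have hcyc₄ : trace (xS * (σS⁻¹ * (σRSᵀ * (N⁻¹ * (σRS * σS⁻¹))))) =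
      trace (σS⁻¹ * (σRSᵀ * (N⁻¹ * (σRS * (σS⁻¹ * xS))))) := by
    rw [trace_mul_comm]; simp only [Matrix.mul_assoc]
  simp only [transpose_sub, transpose_mul, transpose_nonsing_inv, hxS_symm, hσS_symm,
    Matrix.sub_mul, Matrix.mul_sub, Matrix.mul_add, Matrix.mul_neg, trace_add, trace_sub,
    trace_neg, Matrix.mul_assoc, hx₂, Matrix.mul_one]
  linear_combination hcyc₁ + hcyc₂ - hcyc₃ + hcyc₄

end Blocks

variable {V : Type*} [DecidableEq V] {α : Type*}

def extendByZero [Zero α] (A : Finset V) (M : Matrix A A α) : Matrix V V α :=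
  of fun i j => if h : i ∈ A ∧ j ∈ A then M ⟨i, h.1⟩ ⟨j, h.2⟩ else 0

theorem extendByZero_apply_of_mem [Zero α] {A : Finset V} (M : Matrix A A α) {i j : V}
    (hi : i ∈ A) (hj : j ∈ A) : extendByZero A M i j = M ⟨i, hi⟩ ⟨j, hj⟩ := by
  simp [extendByZero, hi, hj]

@[simp]
theorem extendByZero_toBlock_apply [Zero α] (A : Finset V) (N : Matrix V V α) (i j : V) :
    extendByZero A (N.toBlock (· ∈ A) (· ∈ A)) i j = if i ∈ A ∧ j ∈ A then N i j else 0 := by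
  simp [extendByZero, dite_eq_ite]

theorem extendByZero_empty [Zero α] (M : Matrix (∅ : Finset V) (∅ : Finset V) α) :
    extendByZero ∅ M = 0 := by
  ext i j
  simp [extendByZero]

theorem trace_mul_extendByZero [Fintype V] [CommRing α] (x : Matrix V V α) (A : Finset V)
    (M : Matrix A A α) :
    trace (x * extendByZero A M) = trace (x.toBlock (· ∈ A) (· ∈ A) * M) := by
  have key (i : V) : (x * extendByZero A M) i i =
      if hi : i ∈ A then (x.toBlock (· ∈ A) (· ∈ A) * M) ⟨i, hi⟩ ⟨i, hi⟩ else 0 := by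
    by_cases hi : i ∈ A
    · simp [hi, mul_apply, extendByZero, Finset.sum_attach_eq_sum_dite]
    · simp [hi, mul_apply, extendByZero]
  simp only [trace, diag_apply, key]
  exact (Finset.sum_attach_eq_sum_dite A (fun i => (x.toBlock (· ∈ A) (· ∈ A) * M) i i)).symm

def fillIn [CommRing α] (P : Matrix V V α) (R : Finset V) : Matrix V V α :=
  P.submatrix id ((↑) : R → V) * (P.toBlock (· ∈ R) (· ∈ R))⁻¹ * P.submatrix ((↑) : R → V) id

theorem fillIn_apply_eq_zero_of_row [CommRing α] {P : Matrix V V α} {R : Finset V} {i : V}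
    (h : ∀ r ∈ R, P i r = 0) (j : V) : fillIn P R i j = 0 := by
  simp [fillIn, mul_apply, h]

theorem fillIn_apply_eq_zero_of_col [CommRing α] {P : Matrix V V α} {R : Finset V} {j : V}
    (h : ∀ r ∈ R, P r j = 0) (i : V) : fillIn P R i j = 0 := by
  simp [fillIn, mul_apply, h]

theorem fillIn_congr [CommRing α] {P Q : Matrix V V α} {R : Finset V}
    (hrow : ∀ i, ∀ r ∈ R, P i r = Q i r) (hcol : ∀ r ∈ R, ∀ j, P r j = Q r j) :
    fillIn P R = fillIn Q R := by
  have h₁ : P.submatrix id ((↑) : R → V) = Q.submatrix id (↑) := by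
    ext i r; exact hrow i r r.2
  have h₂ : P.submatrix ((↑) : R → V) id = Q.submatrix (↑) id := by
    ext r j; exact hcol r r.2 j
  have h₃ : P.toBlock (· ∈ R) (· ∈ R) = Q.toBlock (· ∈ R) (· ∈ R) := by
    ext r s; exact hcol r r.2 s
  simp only [fillIn, h₁, h₂, h₃]

theorem fillIn_sdiff_apply_eq_zero [CommRing α] {P : Matrix V V α} {A B : Finset V}
    (hP : ∀ i j, P i j ≠ 0 → i ∈ A ∧ j ∈ A ∨ i ∈ B ∧ j ∈ B) {i j : V}
    (hij : ¬(i ∈ B ∧ j ∈ B)) : fillIn P (B \ A) i j = 0 := by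
  by_cases hi : i ∈ B
  · refine fillIn_apply_eq_zero_of_col (fun r hr => ?_) i
    by_contra h
    have := Finset.mem_sdiff.1 hr
    have := hP r j h
    tauto
  · refine fillIn_apply_eq_zero_of_row (fun r hr => ?_) j
    by_contra h
    have := Finset.mem_sdiff.1 hr
    have := hP i r h
    tauto

def marginalPrecision (Sg : Matrix V V ℝ) (A : Finset V) : Matrix V V ℝ :=
  extendByZero A (Sg.toBlock (· ∈ A) (· ∈ A))⁻¹

theorem trace_mul_sub_marginalPrecision [Fintype V] (x Sg : Matrix V V ℝ) (A B : Finset V) :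
    trace (x * (marginalPrecision Sg A - marginalPrecision Sg B)) =
      trace (x.toBlock (· ∈ A) (· ∈ A) * (Sg.toBlock (· ∈ A) (· ∈ A))⁻¹) -
        trace (x.toBlock (· ∈ B) (· ∈ B) * (Sg.toBlock (· ∈ B) (· ∈ B))⁻¹) := by
  rw [Matrix.mul_sub, trace_sub, marginalPrecision, marginalPrecision, trace_mul_extendByZero,
    trace_mul_extendByZero]

theorem marginalPrecision_empty (Sg : Matrix V V ℝ) : marginalPrecision Sg ∅ = 0 :=
  extendByZero_empty _

theorem marginalPrecision_univ [Fintype V] (Sg : Matrix V V ℝ) :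
    marginalPrecision Sg Finset.univ = Sg⁻¹ := by
  let e : (Finset.univ : Finset V) ≃ V := Equiv.subtypeUnivEquiv Finset.mem_univ
  rw [marginalPrecision, show Sg.toBlock _ _ = Sg.submatrix e e from rfl, inv_submatrix_equiv]
  ext i j
  simp [extendByZero, e]

theorem marginalPrecision_eq_of_disjoint {Sg : Matrix V V ℝ} (hSg : Sg.PosDef) {A R : Finset V}
    (hAR : Disjoint A R) :
    marginalPrecision Sg A = extendByZero A ((marginalPrecision Sg (A ∪ R) -
      fillIn (marginalPrecision Sg (A ∪ R)) R).toBlock (· ∈ A) (· ∈ A)) := by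
  set U := A ∪ R
  set P := marginalPrecision Sg U
  let e := Equiv.Finset.union A R hAR
  have hU : (Sg.toBlock (· ∈ U) (· ∈ U)).PosDef := hSg.submatrix Subtype.val_injective
  set N := ((Sg.toBlock (· ∈ U) (· ∈ U))⁻¹).submatrix e e
  have hN : N.PosDef := hU.inv.submatrix e.injective
  have hNinv : N⁻¹ = (Sg.toBlock (· ∈ U) (· ∈ U)).submatrix e e := by
    rw [inv_submatrix_equiv, nonsing_inv_nonsing_inv _ ((isUnit_iff_isUnit_det _).1 hU.isUnit)]
  have hNP (i j : U) : (Sg.toBlock (· ∈ U) (· ∈ U))⁻¹ i j = P i j :=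
    (extendByZero_apply_of_mem _ i.2 j.2).symm
  have h₁₁ : N.toBlocks₁₁ = P.toBlock (· ∈ A) (· ∈ A) := by ext; apply hNP
  have h₁₂ : N.toBlocks₁₂ = P.toBlock (· ∈ A) (· ∈ R) := by ext; apply hNP
  have h₂₁ : N.toBlocks₂₁ = P.toBlock (· ∈ R) (· ∈ A) := by ext; apply hNP
  have h₂₂ : N.toBlocks₂₂ = P.toBlock (· ∈ R) (· ∈ R) := by ext; apply hNP
  have hSchur := inv_toBlocks₁₁_inv hN.isUnit (hN.submatrix Sum.inr_injective).isUnit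
  rw [hNinv, h₁₁, h₁₂, h₂₁, h₂₂] at hSchur
  exact congrArg (extendByZero A) hSchur

theorem marginalPrecision_eq_of_union {Sg : Matrix V V ℝ} (hSg : Sg.PosDef) (A B : Finset V) :
    marginalPrecision Sg A = extendByZero A ((marginalPrecision Sg (A ∪ B) -
      fillIn (marginalPrecision Sg (A ∪ B)) (B \ A)).toBlock (· ∈ A) (· ∈ A)) := by
  have := marginalPrecision_eq_of_disjoint hSg (Finset.disjoint_sdiff : Disjoint A (B \ A))
  rwa [Finset.union_sdiff_self_eq_union] at this

theorem marginalPrecision_apply_ne_zero {Sg : Matrix V V ℝ} (hSg : Sg.PosDef) {A B : Finset V}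
    (hP : ∀ i j, marginalPrecision Sg (A ∪ B) i j ≠ 0 → i ∈ A ∧ j ∈ A ∨ i ∈ B ∧ j ∈ B)
    {i j : V} (h : marginalPrecision Sg A i j ≠ 0) :
    i ∈ A ∧ j ∈ A ∧ (marginalPrecision Sg (A ∪ B) i j ≠ 0 ∨ i ∈ B ∧ j ∈ B) := by
  rw [marginalPrecision_eq_of_union hSg A B, extendByZero_toBlock_apply, sub_apply] at h
  split_ifs at h with hA
  · refine ⟨hA.1, hA.2, or_iff_not_imp_right.2 fun hB h0 => h ?_⟩
    rw [h0, fillIn_sdiff_apply_eq_zero hP hB, sub_zero]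
  · exact absurd rfl h

theorem marginalPrecision_union {Sg : Matrix V V ℝ} (hSg : Sg.PosDef) {A B : Finset V}
    (hP : ∀ i j, marginalPrecision Sg (A ∪ B) i j ≠ 0 → i ∈ A ∧ j ∈ A ∨ i ∈ B ∧ j ∈ B) :
    marginalPrecision Sg (A ∪ B) =
      marginalPrecision Sg A + marginalPrecision Sg B - marginalPrecision Sg (A ∩ B) := by
  set P := marginalPrecision Sg (A ∪ B)
  have hA := marginalPrecision_eq_of_union hSg A B
  have hB := marginalPrecision_eq_of_union hSg B A
  rw [Finset.union_comm] at hB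
  have hS : marginalPrecision Sg (A ∩ B) = extendByZero (A ∩ B)
      ((marginalPrecision Sg A - fillIn (marginalPrecision Sg A) (A \ B)).toBlock
        (· ∈ A ∩ B) (· ∈ A ∩ B)) := by
    have := marginalPrecision_eq_of_disjoint hSg (Finset.disjoint_sdiff_inter A B).symm
    rwa [Finset.union_comm, Finset.sdiff_union_inter] at this
  have hFb {i j : V} : ¬(i ∈ B ∧ j ∈ B) → fillIn P (B \ A) i j = 0 :=
    fillIn_sdiff_apply_eq_zero hP
  have hFa {i j : V} : ¬(i ∈ A ∧ j ∈ A) → fillIn P (A \ B) i j = 0 :=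
    fillIn_sdiff_apply_eq_zero fun i j h => (hP i j h).symm
  have hP0 {i j : V} : ¬(i ∈ A ∧ j ∈ A ∨ i ∈ B ∧ j ∈ B) → P i j = 0 :=
    not_imp_comm.1 (hP i j)
  -- eliminating `B \ A` does not touch the rows and columns of `A \ B`
  have hFS : fillIn (marginalPrecision Sg A) (A \ B) = fillIn P (A \ B) := by
    refine fillIn_congr (fun i r hr => ?_) (fun r hr j => ?_) <;>
      rw [Finset.mem_sdiff] at hr <;>
      simp only [hA, extendByZero_toBlock_apply, sub_apply] <;> split_ifs <;> grind
  ext i j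
  rw [hS, hFS, hA, hB]
  simp only [add_apply, sub_apply, extendByZero_toBlock_apply, Finset.mem_inter]
  split_ifs <;> grind

omit [DecidableEq V] in
theorem PosDef.toBlock_of_subset {M : Matrix V V ℝ} {A B : Finset V}
    (hM : (M.toBlock (· ∈ A) (· ∈ A)).PosDef) (hBA : B ⊆ A) :
    (M.toBlock (· ∈ B) (· ∈ B)).PosDef :=
  hM.submatrix (e := fun b : B => (⟨b, hBA b.2⟩ : A)) fun _ _ h => Subtype.ext (Subtype.mk.inj h)

theorem trace_toBlock_union_mul_inv {x Sg : Matrix V V ℝ} (hx : x.IsSymm) (hSg : Sg.PosDef)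
    {R S : Finset V} (hRS : Disjoint R S) (hxS : IsUnit (x.toBlock (· ∈ S) (· ∈ S))) :
    trace (x.toBlock (· ∈ R ∪ S) (· ∈ R ∪ S) * (Sg.toBlock (· ∈ R ∪ S) (· ∈ R ∪ S))⁻¹) =
      trace (x.toBlock (· ∈ S) (· ∈ S) * (Sg.toBlock (· ∈ S) (· ∈ S))⁻¹) +
      trace ((x.toBlock (· ∈ R) (· ∈ R) - x.toBlock (· ∈ R) (· ∈ S) *
          (x.toBlock (· ∈ S) (· ∈ S))⁻¹ * x.toBlock (· ∈ S) (· ∈ R)) *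
        (Sg.toBlock (· ∈ R) (· ∈ R) - Sg.toBlock (· ∈ R) (· ∈ S) *
          (Sg.toBlock (· ∈ S) (· ∈ S))⁻¹ * Sg.toBlock (· ∈ S) (· ∈ R))⁻¹) +
      trace ((x.toBlock (· ∈ R) (· ∈ S) * (x.toBlock (· ∈ S) (· ∈ S))⁻¹ -
          Sg.toBlock (· ∈ R) (· ∈ S) * (Sg.toBlock (· ∈ S) (· ∈ S))⁻¹)ᵀ *
        (Sg.toBlock (· ∈ R) (· ∈ R) - Sg.toBlock (· ∈ R) (· ∈ S) *
          (Sg.toBlock (· ∈ S) (· ∈ S))⁻¹ * Sg.toBlock (· ∈ S) (· ∈ R))⁻¹ *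
        (x.toBlock (· ∈ R) (· ∈ S) * (x.toBlock (· ∈ S) (· ∈ S))⁻¹ -
          Sg.toBlock (· ∈ R) (· ∈ S) * (Sg.toBlock (· ∈ S) (· ∈ S))⁻¹) *
        x.toBlock (· ∈ S) (· ∈ S)) := by
  have hSgs : Sg.IsSymm := by simpa using hSg.isHermitian
  let e := Equiv.Finset.union R S hRS
  have hblocks (M : Matrix V V ℝ) (hM : M.IsSymm) :
      (M.toBlock (· ∈ R ∪ S) (· ∈ R ∪ S)).submatrix e e =
        fromBlocks (M.toBlock (· ∈ R) (· ∈ R)) (M.toBlock (· ∈ R) (· ∈ S))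
          (M.toBlock (· ∈ R) (· ∈ S))ᵀ (M.toBlock (· ∈ S) (· ∈ S)) := by
    ext (i | i) (j | j) <;> simp [e, hM.apply]
  have htranspose (M : Matrix V V ℝ) (hM : M.IsSymm) :
      M.toBlock (· ∈ S) (· ∈ R) = (M.toBlock (· ∈ R) (· ∈ S))ᵀ := by
    ext; simp [hM.apply]
  have hσS : IsUnit (Sg.toBlock (· ∈ S) (· ∈ S)) := (hSg.submatrix Subtype.val_injective).isUnit
  have hU : (Sg.toBlock (· ∈ R ∪ S) (· ∈ R ∪ S)).PosDef := hSg.submatrix Subtype.val_injective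
  have hSchur := (hU.submatrix e.injective).isUnit_schur
  rw [hblocks Sg hSgs] at hSchur
  simp only [toBlocks_fromBlocks₁₁, toBlocks_fromBlocks₁₂, toBlocks_fromBlocks₂₁,
    toBlocks_fromBlocks₂₂] at hSchur
  rw [← trace_submatrix_equiv _ e, ← submatrix_mul_equiv _ _ _ e, ← inv_submatrix_equiv,
    hblocks x hx, hblocks Sg hSgs, trace_fromBlocks_mul_inv_fromBlocks _ _ _ _ _ _ hxS hσS hSchur
      (hx.submatrix _) (hSgs.submatrix _), htranspose x hx, htranspose Sg hSgs]

end Matrix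

section Cliques

variable {r k : ℕ}

theorem subAB_eq_toBlock (m : Matrix (Fin r) (Fin r) ℝ) (A B : Finset (Fin r)) :
    subAB m A B = m.toBlock (· ∈ A) (· ∈ B) := rfl

theorem SepG_castSucc (C : Fin (k + 1) → Finset (Fin r)) (j : Fin k) :
    SepG (fun l => C l.castSucc) j = SepG C j.castSucc := by
  ext v
  simp only [SepG, Finset.mem_inter, Finset.mem_biUnion, Finset.mem_filter, Finset.mem_univ,
    true_and]
  constructor
  · rintro ⟨hv, l, hl, hvl⟩
    exact ⟨hv, l.castSucc, Fin.castSucc_lt_castSucc_iff.2 hl, hvl⟩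
  · rintro ⟨hv, l, hl, hvl⟩
    obtain ⟨l, rfl⟩ := Fin.exists_castSucc_eq.2 (hl.trans (Fin.castSucc_lt_last j)).ne
    exact ⟨hv, l, Fin.castSucc_lt_castSucc_iff.1 hl, hvl⟩

theorem SepG_last (C : Fin (k + 1) → Finset (Fin r)) :
    SepG C (Fin.last k) = Finset.univ.biUnion (fun l : Fin k => C l.castSucc) ∩ C (Fin.last k) := by
  ext v
  simp only [SepG, Finset.mem_inter, Finset.mem_biUnion, Finset.mem_filter, Finset.mem_univ,
    true_and, Fin.exists_fin_succ', Fin.castSucc_lt_last, lt_irrefl, false_and, or_false]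
  tauto

theorem biUnion_univ_castSucc (C : Fin (k + 1) → Finset (Fin r)) :
    Finset.univ.biUnion C =
      Finset.univ.biUnion (fun l : Fin k => C l.castSucc) ∪ C (Fin.last k) := by
  ext v
  simp [Fin.exists_fin_succ']

theorem IsPerfectOrder.castSucc {C : Fin (k + 1) → Finset (Fin r)} (hC : IsPerfectOrder C) :
    IsPerfectOrder (fun l : Fin k => C l.castSucc) := by
  intro j hj
  obtain ⟨l, hl, hsub⟩ := hC j.castSucc hj
  obtain ⟨l, rfl⟩ := Fin.exists_castSucc_eq.2 (hl.trans (Fin.castSucc_lt_last j)).ne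
  exact ⟨l, Fin.castSucc_lt_castSucc_iff.1 hl, SepG_castSucc C j ▸ hsub⟩

theorem IsPerfectOrder.exists_castSucc_of_mem_SepG_last {C : Fin (k + 1) → Finset (Fin r)}
    (hC : IsPerfectOrder C) {i j : Fin r} (hi : i ∈ SepG C (Fin.last k))
    (hj : j ∈ SepG C (Fin.last k)) : ∃ l : Fin k, i ∈ C l.castSucc ∧ j ∈ C l.castSucc := by
  have hk : k ≠ 0 := by
    rw [SepG_last, Finset.mem_inter, Finset.mem_biUnion] at hi
    obtain ⟨⟨l, -, -⟩, -⟩ := hi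
    exact l.pos.ne'
  obtain ⟨l, hl, hsub⟩ := hC (Fin.last k) hk
  obtain ⟨l, rfl⟩ := Fin.exists_castSucc_eq.2 hl.ne
  exact ⟨l, hsub hi, hsub hj⟩

theorem exists_isMaxClique_superset {E : Finset (Fin r × Fin r)} {D : Finset (Fin r)}
    (hD : IsCompleteSet E D) : ∃ B, IsMaxClique E B ∧ D ⊆ B := by
  obtain ⟨B, hDB, hB⟩ := Finite.exists_le_maximal hD
  exact ⟨B, ⟨hB.prop, fun B' hB' hBB' => le_antisymm hBB' (hB.le_of_ge hB' hBB')⟩, hDB⟩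

theorem SepG_mk_zero (C : Fin k → Finset (Fin r)) (hk : 0 < k) : SepG C ⟨0, hk⟩ = ∅ := by
  simp [SepG, Fin.lt_def]

theorem ResG_union_SepG (C : Fin k → Finset (Fin r)) (j : Fin k) : ResG C j ∪ SepG C j = C j :=
  Finset.sdiff_union_inter _ _

theorem disjoint_ResG_SepG (C : Fin k → Finset (Fin r)) (j : Fin k) :
    Disjoint (ResG C j) (SepG C j) :=
  Finset.disjoint_sdiff_inter _ _

theorem biUnion_eq_univ_of_forall_isMaxClique {E : Finset (Fin r × Fin r)}
    {C : Fin k → Finset (Fin r)} (hall : ∀ A, IsMaxClique E A → ∃ i, C i = A) :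
    Finset.univ.biUnion C = Finset.univ := by
  refine Finset.eq_univ_of_forall fun v => ?_
  obtain ⟨B, hB, hvB⟩ := exists_isMaxClique_superset (E := E) (D := {v}) (by simp [IsCompleteSet])
  obtain ⟨l, rfl⟩ := hall B hB
  exact Finset.mem_biUnion.2 ⟨l, Finset.mem_univ _, hvB (Finset.mem_singleton_self v)⟩

theorem exists_mem_clique_of_apply_ne_zero {E : Finset (Fin r × Fin r)}
    {C : Fin k → Finset (Fin r)} (hall : ∀ A, IsMaxClique E A → ∃ i, C i = A)
    {y : Matrix (Fin r) (Fin r) ℝ} (hy : y ∈ ZG r E) {i j : Fin r} (h : y i j ≠ 0) :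
    ∃ l, i ∈ C l ∧ j ∈ C l := by
  have hE (u w : Fin r) (h : y u w ≠ 0) : (u, w) ∈ E := by
    by_contra hE
    exact h (hy.2 u w hE)
  have hcomplete : IsCompleteSet E {i, j} := by
    intro u hu w hw huw
    simp only [Finset.mem_insert, Finset.mem_singleton] at hu hw
    rcases hu with rfl | rfl <;> rcases hw with rfl | rfl
    · exact absurd rfl huw
    · exact hE _ _ h
    · exact hE _ _ (by rwa [hy.1.apply])
    · exact absurd rfl huw
  obtain ⟨B, hB, hijB⟩ := exists_isMaxClique_superset hcomplete
  obtain ⟨l, rfl⟩ := hall B hB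
  exact ⟨l, hijB (by simp), hijB (by simp)⟩

theorem marginalPrecision_biUnion_eq_sum {Sg : Matrix (Fin r) (Fin r) ℝ} (hSg : Sg.PosDef) :
    ∀ {k : ℕ} (C : Fin k → Finset (Fin r)), IsPerfectOrder C →
      (∀ i j, marginalPrecision Sg (Finset.univ.biUnion C) i j ≠ 0 → ∃ l, i ∈ C l ∧ j ∈ C l) →
      marginalPrecision Sg (Finset.univ.biUnion C) =
        ∑ l, (marginalPrecision Sg (C l) - marginalPrecision Sg (SepG C l))
  | 0, C, _, _ => by simp [marginalPrecision_empty]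
  | k + 1, C, hC, hsupp => by
    set U := Finset.univ.biUnion fun l : Fin k => C l.castSucc
    rw [biUnion_univ_castSucc] at hsupp ⊢
    have hsuppU : ∀ i j, marginalPrecision Sg (U ∪ C (Fin.last k)) i j ≠ 0 →
        i ∈ U ∧ j ∈ U ∨ i ∈ C (Fin.last k) ∧ j ∈ C (Fin.last k) := by
      intro i j h
      obtain ⟨l, hi, hj⟩ := hsupp i j h
      cases l using Fin.lastCases with
      | last => exact Or.inr ⟨hi, hj⟩
      | cast l => exact Or.inl ⟨Finset.mem_biUnion.2 ⟨l, Finset.mem_univ _, hi⟩,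
          Finset.mem_biUnion.2 ⟨l, Finset.mem_univ _, hj⟩⟩
    have hmarg : ∀ i j, marginalPrecision Sg U i j ≠ 0 →
        ∃ l : Fin k, i ∈ C l.castSucc ∧ j ∈ C l.castSucc := by
      intro i j h
      obtain ⟨hi, hj, hij⟩ := marginalPrecision_apply_ne_zero hSg hsuppU h
      have hsep (hiB : i ∈ C (Fin.last k)) (hjB : j ∈ C (Fin.last k)) :
          ∃ l : Fin k, i ∈ C l.castSucc ∧ j ∈ C l.castSucc :=
        hC.exists_castSucc_of_mem_SepG_last (by rw [SepG_last]; exact Finset.mem_inter.2 ⟨hi, hiB⟩)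
          (by rw [SepG_last]; exact Finset.mem_inter.2 ⟨hj, hjB⟩)
      rcases hij with hP | ⟨hiB, hjB⟩
      · obtain ⟨l, hil, hjl⟩ := hsupp i j hP
        cases l using Fin.lastCases with
        | last => exact hsep hil hjl
        | cast l => exact ⟨l, hil, hjl⟩
      · exact hsep hiB hjB
    rw [marginalPrecision_union hSg hsuppU,
      marginalPrecision_biUnion_eq_sum hSg _ hC.castSucc hmarg, Fin.sum_univ_castSucc, SepG_last]
    simp only [SepG_castSucc]
    abel

end Cliques

theorem statement2_general (r k : ℕ) (hk : 0 < k)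
    (E : Finset (Fin r × Fin r))
    (C : Fin k → Finset (Fin r))
    (hall : ∀ A : Finset (Fin r), IsMaxClique E A → ∃ i : Fin k, C i = A)
    (hperf : IsPerfectOrder C)
    (x : Matrix (Fin r) (Fin r) ℝ)
    (hx : x ∈ ZG r E) (hxpd : ∀ i : Fin k, (subAB x (C i) (C i)).PosDef)
    (Sg : Matrix (Fin r) (Fin r) ℝ) (hSg : Sg.PosDef) (hSginv : Sg⁻¹ ∈ ZG r E) :
    Matrix.trace (x * Sg⁻¹) =
      Matrix.trace (subAB x (C ⟨0, hk⟩) (C ⟨0, hk⟩) * (subAB Sg (C ⟨0, hk⟩) (C ⟨0, hk⟩))⁻¹)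
      + ∑ i ∈ Finset.univ.filter (fun i : Fin k => (i : ℕ) ≠ 0),
         (Matrix.trace
            ((subAB x (ResG C i) (ResG C i)
              - subAB x (ResG C i) (SepG C i) * (subAB x (SepG C i) (SepG C i))⁻¹
                  * subAB x (SepG C i) (ResG C i)) *
             (subAB Sg (ResG C i) (ResG C i)
              - subAB Sg (ResG C i) (SepG C i) * (subAB Sg (SepG C i) (SepG C i))⁻¹
                  * subAB Sg (SepG C i) (ResG C i))⁻¹)
          + Matrix.trace
            ((subAB x (ResG C i) (SepG C i) * (subAB x (SepG C i) (SepG C i))⁻¹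
              - subAB Sg (ResG C i) (SepG C i) * (subAB Sg (SepG C i) (SepG C i))⁻¹)ᵀ *
             (subAB Sg (ResG C i) (ResG C i)
              - subAB Sg (ResG C i) (SepG C i) * (subAB Sg (SepG C i) (SepG C i))⁻¹
                  * subAB Sg (SepG C i) (ResG C i))⁻¹ *
             (subAB x (ResG C i) (SepG C i) * (subAB x (SepG C i) (SepG C i))⁻¹
              - subAB Sg (ResG C i) (SepG C i) * (subAB Sg (SepG C i) (SepG C i))⁻¹) *
             subAB x (SepG C i) (SepG C i))) := by
  have hcover := biUnion_eq_univ_of_forall_isMaxClique hall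
  have hdecomp := marginalPrecision_biUnion_eq_sum hSg C hperf (by
    rw [hcover, marginalPrecision_univ]
    exact fun i j => exists_mem_clique_of_apply_ne_zero hall hSginv)
  rw [hcover, marginalPrecision_univ] at hdecomp
  rw [hdecomp, Matrix.mul_sum, trace_sum, ← Finset.add_sum_erase _ _ (Finset.mem_univ ⟨0, hk⟩)]
  simp only [trace_mul_sub_marginalPrecision, subAB_eq_toBlock]
  rw [SepG_mk_zero, trace_eq_zero_of_isEmpty (n := (∅ : Finset (Fin r))), sub_zero]
  congr 1
  refine Finset.sum_congr (by ext; simp [Fin.ext_iff]) fun l _ => ?_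
  have hxS := ((hxpd l).toBlock_of_subset (B := SepG C l) Finset.inter_subset_left).isUnit
  have hsplit := trace_toBlock_union_mul_inv hx.1 hSg (disjoint_ResG_SepG C l) hxS
  rw [ResG_union_SepG] at hsplit
  rw [hsplit]
  ring

theorem statement2 (r k : ℕ) (hr : 2 ≤ r) (hk : 0 < k)
    (E : Finset (Fin r × Fin r))
    (hEsymm : ∀ i j : Fin r, (i, j) ∈ E → (j, i) ∈ E)
    (hEdiag : ∀ i : Fin r, (i, i) ∈ E)
    (C : Fin k → Finset (Fin r))
    (hmax : ∀ i : Fin k, IsMaxClique E (C i))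
    (hinj : Function.Injective C)
    (hall : ∀ A : Finset (Fin r), IsMaxClique E A → ∃ i : Fin k, C i = A)
    (hperf : IsPerfectOrder C)
    (x : Matrix (Fin r) (Fin r) ℝ)
    (hx : x ∈ ZG r E) (hxpd : ∀ i : Fin k, (subAB x (C i) (C i)).PosDef)
    (Sg : Matrix (Fin r) (Fin r) ℝ) (hSg : Sg.PosDef) (hSginv : Sg⁻¹ ∈ ZG r E) :
    Matrix.trace (x * Sg⁻¹) =
      Matrix.trace (subAB x (C ⟨0, hk⟩) (C ⟨0, hk⟩) * (subAB Sg (C ⟨0, hk⟩) (C ⟨0, hk⟩))⁻¹)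
      + ∑ i ∈ Finset.univ.filter (fun i : Fin k => (i : ℕ) ≠ 0),
         (Matrix.trace
            ((subAB x (ResG C i) (ResG C i)
              - subAB x (ResG C i) (SepG C i) * (subAB x (SepG C i) (SepG C i))⁻¹
                  * subAB x (SepG C i) (ResG C i)) *
             (subAB Sg (ResG C i) (ResG C i)
              - subAB Sg (ResG C i) (SepG C i) * (subAB Sg (SepG C i) (SepG C i))⁻¹
                  * subAB Sg (SepG C i) (ResG C i))⁻¹)
          + Matrix.trace
            ((subAB x (ResG C i) (SepG C i) * (subAB x (SepG C i) (SepG C i))⁻¹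
              - subAB Sg (ResG C i) (SepG C i) * (subAB Sg (SepG C i) (SepG C i))⁻¹)ᵀ *
             (subAB Sg (ResG C i) (ResG C i)
              - subAB Sg (ResG C i) (SepG C i) * (subAB Sg (SepG C i) (SepG C i))⁻¹
                  * subAB Sg (SepG C i) (ResG C i))⁻¹ *
             (subAB x (ResG C i) (SepG C i) * (subAB x (SepG C i) (SepG C i))⁻¹
              - subAB Sg (ResG C i) (SepG C i) * (subAB Sg (SepG C i) (SepG C i))⁻¹) *
             subAB x (SepG C i) (SepG C i))) :=
  statement2_general r k hk E C hall hperf x hx hxpd Sg hSg hSginv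
end
end

section
/- Let G be a finite connected simple graph. Then the following are equivalent: (a) G contains no induced cycle of length greater than or equal to four and no induced path on four vertices (i.e., G is homogeneous); (b) for every pair of adjacent vertices i and j, either N[i] ⊆ N[j] or N[j] ⊆ N[i]. -/
/-!
An edge `i ~ j` violates the nesting of closed neighborhoods exactly when there are vertices
`a ∈ N[i] \ N[j]` and `b ∈ N[j] \ N[i]`. Then `a - i - j - b` is an induced 4-cycle if `a ~ b`
and an induced path on four vertices otherwise. Conversely, the middle edge of an induced path
on four vertices, and every edge of an induced cycle of length at least four, is such a
violating edge.
-/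

open SimpleGraph

/-- The closed neighborhood `N[i] = {i} ∪ {j : j ~ i}`. -/
def closedNbhd {V : Type*} (G : SimpleGraph V) (i : V) : Set V :=
  insert i (G.neighborSet i)

theorem ZMod.natCast_ne_zero_of_lt {n k : ℕ} (hk : 0 < k) (hkn : k < n) : (k : ZMod n) ≠ 0 := by
  rw [Ne, ZMod.natCast_eq_zero_iff]
  exact Nat.not_dvd_of_pos_of_lt hk hkn

theorem ZMod.four_cases : ∀ x : ZMod 4, x = 0 ∨ x = 1 ∨ x = 2 ∨ x = 3 := by decide

section ClosedNbhd

variable {V : Type*} {G : SimpleGraph V} {i x : V}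

theorem mem_closedNbhd : x ∈ closedNbhd G i ↔ x = i ∨ G.Adj i x := by
  simp [closedNbhd]

theorem mem_closedNbhd_comm : x ∈ closedNbhd G i ↔ i ∈ closedNbhd G x := by
  simp only [mem_closedNbhd, eq_comm, G.adj_comm]

theorem mem_closedNbhd_of_adj (h : G.Adj i x) : x ∈ closedNbhd G i :=
  mem_closedNbhd.2 (Or.inr h)

theorem adj_of_mem_closedNbhd_of_ne (h : x ∈ closedNbhd G i) (hne : x ≠ i) : G.Adj i x :=
  (mem_closedNbhd.1 h).resolve_left hne

end ClosedNbhd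

namespace SimpleGraph

variable {V : Type*} {G : SimpleGraph V}

def ClosedNbhdsNested (G : SimpleGraph V) : Prop :=
  ∀ i j : V, G.Adj i j → closedNbhd G i ⊆ closedNbhd G j ∨ closedNbhd G j ⊆ closedNbhd G i

def IsInducedCycle (G : SimpleGraph V) (n : ℕ) (v : ZMod n → V) : Prop :=
  Function.Injective v ∧ (∀ i : ZMod n, G.Adj (v i) (v (i + 1))) ∧
    (∀ i j : ZMod n, G.Adj (v i) (v j) → j = i + 1 ∨ i = j + 1)

def IsInducedP4 (G : SimpleGraph V) (a b c d : V) : Prop :=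
  a ≠ b ∧ a ≠ c ∧ a ≠ d ∧ b ≠ c ∧ b ≠ d ∧ c ≠ d ∧
    G.Adj a b ∧ G.Adj b c ∧ G.Adj c d ∧ ¬ G.Adj a c ∧ ¬ G.Adj a d ∧ ¬ G.Adj b d

theorem isInducedCycle_four {a b c d : V} (hab : G.Adj a b) (hbc : G.Adj b c) (hcd : G.Adj c d)
    (hda : G.Adj d a) (hac : a ≠ c) (hbd : b ≠ d) (hnac : ¬ G.Adj a c) (hnbd : ¬ G.Adj b d) :
    G.IsInducedCycle 4 ![a, b, c, d] := by
  refine ⟨?_, ?_, ?_⟩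
  · intro x y hxy
    rcases ZMod.four_cases x with rfl | rfl | rfl | rfl <;>
      rcases ZMod.four_cases y with rfl | rfl | rfl | rfl <;>
      first
        | rfl
        | simp_all [hab.ne, hbc.ne, hcd.ne, hda.ne, hab.ne.symm, hbc.ne.symm, hcd.ne.symm,
            hda.ne.symm, hac.symm, hbd.symm]
  · intro x
    rcases ZMod.four_cases x with rfl | rfl | rfl | rfl <;> reduce_mod_char <;> simpa
  · intro x y h
    rcases ZMod.four_cases x with rfl | rfl | rfl | rfl <;>
      rcases ZMod.four_cases y with rfl | rfl | rfl | rfl <;>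
      simp_all [G.adj_comm] <;> decide

namespace IsInducedCycle

variable {n : ℕ} {v : ZMod n → V}

theorem adj (hv : G.IsInducedCycle n v) (i : ZMod n) : G.Adj (v i) (v (i + 1)) :=
  hv.2.1 i

theorem pred_notMem_closedNbhd_succ (hv : G.IsInducedCycle n v) (hn : 4 ≤ n) (i : ZMod n) :
    v (i - 1) ∉ closedNbhd G (v (i + 1)) := by
  -- A coincidence or an adjacency of `v (i - 1)` and `v (i + 1)` forces `1`, `2` or `3` to
  -- vanish in `ZMod n`.
  have h1 : ((1 : ℕ) : ZMod n) ≠ 0 := ZMod.natCast_ne_zero_of_lt (by norm_num) (by omega)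
  have h2 : ((2 : ℕ) : ZMod n) ≠ 0 := ZMod.natCast_ne_zero_of_lt (by norm_num) (by omega)
  have h3 : ((3 : ℕ) : ZMod n) ≠ 0 := ZMod.natCast_ne_zero_of_lt (by norm_num) (by omega)
  push_cast at h1 h2 h3
  rw [mem_closedNbhd, not_or]
  refine ⟨fun h => h2 ?_, fun h => ?_⟩
  · linear_combination -hv.1 h
  · rcases hv.2.2 _ _ h with h' | h'
    · exact h3 (by linear_combination -h')
    · exact h1 (by linear_combination h')

theorem not_closedNbhd_subset_or (hv : G.IsInducedCycle n v) (hn : 4 ≤ n) (i : ZMod n) :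
    ¬ (closedNbhd G (v i) ⊆ closedNbhd G (v (i + 1)) ∨
      closedNbhd G (v (i + 1)) ⊆ closedNbhd G (v i)) := by
  rintro (h | h)
  · have hpred : v (i - 1) ∈ closedNbhd G (v i) := by
      simpa using mem_closedNbhd_of_adj (hv.adj (i - 1)).symm
    exact hv.pred_notMem_closedNbhd_succ hn i (h hpred)
  · have hsucc : v (i + 1 + 1) ∈ closedNbhd G (v (i + 1)) := mem_closedNbhd_of_adj (hv.adj _)
    have := hv.pred_notMem_closedNbhd_succ hn (i + 1)
    rw [add_sub_cancel_right, mem_closedNbhd_comm] at this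
    exact this (h hsucc)

theorem not_closedNbhdsNested (hv : G.IsInducedCycle n v) (hn : 4 ≤ n) :
    ¬ G.ClosedNbhdsNested :=
  fun h => hv.not_closedNbhd_subset_or hn 0 (h _ _ (hv.adj 0))

end IsInducedCycle

theorem IsInducedP4.not_closedNbhdsNested {a b c d : V} (h : G.IsInducedP4 a b c d) :
    ¬ G.ClosedNbhdsNested := by
  obtain ⟨-, hac, -, -, hbd, -, hab, hbc, hcd, hnac, -, hnbd⟩ := h
  have ha : a ∉ closedNbhd G c := by
    rw [mem_closedNbhd, not_or, G.adj_comm]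
    exact ⟨hac, hnac⟩
  have hd : d ∉ closedNbhd G b := by
    rw [mem_closedNbhd, not_or]
    exact ⟨hbd.symm, hnbd⟩
  intro hnested
  rcases hnested b c hbc with h | h
  · exact ha (h (mem_closedNbhd_of_adj hab.symm))
  · exact hd (h (mem_closedNbhd_of_adj hcd))

theorem exists_isInducedCycle_four_or_isInducedP4 (hG : ¬ G.ClosedNbhdsNested) :
    (∃ v : ZMod 4 → V, G.IsInducedCycle 4 v) ∨ ∃ a b c d : V, G.IsInducedP4 a b c d := by
  simp only [ClosedNbhdsNested, not_forall, not_or] at hG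
  obtain ⟨i, j, hij, hi, hj⟩ := hG
  obtain ⟨a, hai, haj⟩ := Set.not_subset.1 hi
  obtain ⟨b, hbj, hbi⟩ := Set.not_subset.1 hj
  have hia : G.Adj i a :=
    adj_of_mem_closedNbhd_of_ne hai fun h => haj (h ▸ mem_closedNbhd_of_adj hij.symm)
  have hjb : G.Adj j b :=
    adj_of_mem_closedNbhd_of_ne hbj fun h => hbi (h ▸ mem_closedNbhd_of_adj hij)
  have hab : a ≠ b := fun h => haj (h ▸ hbj)
  rw [mem_closedNbhd, not_or] at haj hbi
  obtain ⟨haj, hnja⟩ := haj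
  obtain ⟨hbi, hnib⟩ := hbi
  by_cases hadj : G.Adj a b
  · exact Or.inl ⟨_, isInducedCycle_four hia.symm hij hjb hadj.symm haj (Ne.symm hbi)
      (fun h => hnja h.symm) hnib⟩
  · exact Or.inr ⟨a, i, j, b, hia.ne.symm, haj, hab, hij.ne, Ne.symm hbi, hjb.ne,
      hia.symm, hij, hjb, fun h => hnja h.symm, hadj, hnib⟩

end SimpleGraph

theorem statement3_general {V : Type*} (G : SimpleGraph V) :
    ((¬ ∃ n : ℕ, 4 ≤ n ∧ ∃ v : ZMod n → V, Function.Injective v ∧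
        (∀ i : ZMod n, G.Adj (v i) (v (i + 1))) ∧
        (∀ i j : ZMod n, G.Adj (v i) (v j) → j = i + 1 ∨ i = j + 1)) ∧
      (¬ ∃ a b c d : V, a ≠ b ∧ a ≠ c ∧ a ≠ d ∧ b ≠ c ∧ b ≠ d ∧ c ≠ d ∧
        G.Adj a b ∧ G.Adj b c ∧ G.Adj c d ∧ ¬ G.Adj a c ∧ ¬ G.Adj a d ∧ ¬ G.Adj b d))
    ↔ (∀ i j : V, G.Adj i j →
        (closedNbhd G i ⊆ closedNbhd G j ∨ closedNbhd G j ⊆ closedNbhd G i)) := by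
  constructor
  · rintro ⟨hcycle, hpath⟩
    by_contra hG
    rcases exists_isInducedCycle_four_or_isInducedP4 hG with ⟨v, hv⟩ | ⟨a, b, c, d, hP⟩
    · exact hcycle ⟨4, le_rfl, v, hv⟩
    · exact hpath ⟨a, b, c, d, hP⟩
  · intro hG
    exact ⟨fun ⟨n, hn, v, hv⟩ => IsInducedCycle.not_closedNbhdsNested hv hn hG,
      fun ⟨a, b, c, d, hP⟩ => IsInducedP4.not_closedNbhdsNested hP hG⟩

theorem statement3 {V : Type*} [Fintype V] (G : SimpleGraph V) (hconn : G.Connected) :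
    ((¬ ∃ n : ℕ, 4 ≤ n ∧ ∃ v : ZMod n → V, Function.Injective v ∧
        (∀ i : ZMod n, G.Adj (v i) (v (i + 1))) ∧
        (∀ i j : ZMod n, G.Adj (v i) (v j) → j = i + 1 ∨ i = j + 1)) ∧
      (¬ ∃ a b c d : V, a ≠ b ∧ a ≠ c ∧ a ≠ d ∧ b ≠ c ∧ b ≠ d ∧ c ≠ d ∧
        G.Adj a b ∧ G.Adj b c ∧ G.Adj c d ∧ ¬ G.Adj a c ∧ ¬ G.Adj a d ∧ ¬ G.Adj b d))
    ↔ (∀ i j : V, G.Adj i j →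
        (closedNbhd G i ⊆ closedNbhd G j ∨ closedNbhd G j ⊆ closedNbhd G i)) :=
  statement3_general G
end

section
/- Let G be a finite connected homogeneous graph with vertex set V. Then a subset C ⊆ V is complete (pairwise adjacent or a singleton) if and only if there exists i ∈ V such that C ⊆ {j ∈ V : N[j] ⊇ N[i]}. Consequently, the maximal cliques of G are exactly the sets V_t = {j ∈ V : N[j] ⊇ N[i]} (for any representative i of t), where t ranges over the maximal elements of the poset T. -/
open SimpleGraph

/-! A clique of a homogeneous graph lies in `V_a = {j | N[a] ⊆ N[j]}` for any vertex `a` of the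
clique with minimal closed neighborhood, because the neighborhoods of adjacent vertices are
comparable. Conversely each `V_i` is a clique, as `N[i] ⊆ N[j]` forces `j ∈ N[i]`. So the maximal
cliques are the inclusion-maximal sets `V_i`, i.e. those with `N[i]` minimal. -/

namespace SimpleGraph

variable {V : Type*} {G : SimpleGraph V}

/-- The set `V_t` of the paper, for `i` a representative of `t`. -/
def dominators (G : SimpleGraph V) (i : V) : Set V :=
  {j | closedNbhd G i ⊆ closedNbhd G j}

lemma mem_closedNbhd {i j : V} : j ∈ closedNbhd G i ↔ j = i ∨ G.Adj i j := Iff.rfl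

lemma self_mem_closedNbhd (i : V) : i ∈ closedNbhd G i := Set.mem_insert i _

lemma mem_closedNbhd_comm {i j : V} : j ∈ closedNbhd G i ↔ i ∈ closedNbhd G j := by
  simp only [mem_closedNbhd, eq_comm, G.adj_comm]

lemma self_mem_dominators (i : V) : i ∈ G.dominators i := Set.Subset.rfl

lemma dominators_subset_dominators {i k : V} (h : closedNbhd G k ⊆ closedNbhd G i) :
    G.dominators i ⊆ G.dominators k :=
  fun _ hj => h.trans hj

lemma pairwise_adj_dominators (i : V) : (G.dominators i).Pairwise G.Adj := by
  intro j hj k hk hjk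
  have hji : j ∈ closedNbhd G i := mem_closedNbhd_comm.mp (hj (self_mem_closedNbhd i))
  rcases mem_closedNbhd.mp (hk hji) with rfl | hkj
  · exact absurd rfl hjk
  · exact hkj.symm

/-- The connected graphs with this property are the paper's homogeneous graphs. -/
def IsHomogeneous (G : SimpleGraph V) : Prop :=
  ∀ i j : V, G.Adj i j → (closedNbhd G i ⊆ closedNbhd G j ∨ closedNbhd G j ⊆ closedNbhd G i)

lemma subset_dominators_of_pairwise_adj_of_minimalFor (hhom : G.IsHomogeneous) {C : Set V}
    (hC : C.Pairwise G.Adj) {a : V} (ha : MinimalFor (· ∈ C) (closedNbhd G) a) :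
    C ⊆ G.dominators a := by
  intro j hj
  obtain rfl | hja := eq_or_ne j a
  · exact self_mem_dominators j
  · rcases hhom a j (hC ha.1 hj hja.symm) with haj | hja'
    · exact haj
    · exact ha.2 hj hja'

lemma pairwise_adj_iff_exists_subset_dominators [Finite V] [Nonempty V] (hhom : G.IsHomogeneous)
    (C : Set V) :
    C.Pairwise G.Adj ↔ ∃ i, C ⊆ G.dominators i := by
  refine ⟨fun hC => ?_, fun ⟨i, hi⟩ => (pairwise_adj_dominators i).mono hi⟩
  rcases C.eq_empty_or_nonempty with rfl | hne
  · exact ⟨Classical.arbitrary V, Set.empty_subset _⟩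
  · obtain ⟨a, ha⟩ := C.toFinite.exists_minimalFor (closedNbhd G) C hne
    exact ⟨a, subset_dominators_of_pairwise_adj_of_minimalFor hhom hC ha⟩

lemma maximal_pairwise_adj_iff [Finite V] [Nonempty V] (hhom : G.IsHomogeneous) (D : Set V) :
    (D.Pairwise G.Adj ∧ ∀ D' : Set V, D'.Pairwise G.Adj → D ⊆ D' → D = D') ↔
      ∃ i, (∀ j, closedNbhd G j ⊆ closedNbhd G i → closedNbhd G i ⊆ closedNbhd G j) ∧
        D = G.dominators i := by
  have hclique := pairwise_adj_iff_exists_subset_dominators hhom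
  constructor
  · rintro ⟨hD, hmax⟩
    obtain ⟨i, hi⟩ := (hclique D).mp hD
    have hDi : D = G.dominators i := hmax _ (pairwise_adj_dominators i) hi
    refine ⟨i, fun k hki => ?_, hDi⟩
    have hDk : D = G.dominators k :=
      hmax _ (pairwise_adj_dominators k) (hi.trans (dominators_subset_dominators hki))
    have hkD : k ∈ D := hDk ▸ self_mem_dominators k
    rwa [hDi] at hkD
  · rintro ⟨i, hmin, rfl⟩
    refine ⟨pairwise_adj_dominators i, fun D' hD' hiD' => ?_⟩
    obtain ⟨k, hk⟩ := (hclique D').mp hD'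
    have hki : closedNbhd G k ⊆ closedNbhd G i := hk (hiD' (self_mem_dominators i))
    exact hiD'.antisymm (hk.trans (dominators_subset_dominators (hmin k hki)))

end SimpleGraph

theorem statement5 {V : Type*} [Fintype V] (G : SimpleGraph V) (hconn : G.Connected)
    (hhom : ∀ i j : V, G.Adj i j →
      (closedNbhd G i ⊆ closedNbhd G j ∨ closedNbhd G j ⊆ closedNbhd G i)) :
    -- a subset is complete iff it is contained in some `V_t = {j : N[j] ⊇ N[i]}`
    (∀ C : Set V, C.Pairwise G.Adj ↔
      ∃ i : V, ∀ j ∈ C, closedNbhd G i ⊆ closedNbhd G j) ∧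
    -- the maximal cliques are exactly the sets `V_t` for `t` maximal in the poset `T`
    (∀ D : Set V,
      (D.Pairwise G.Adj ∧ ∀ D' : Set V, D'.Pairwise G.Adj → D ⊆ D' → D = D') ↔
      ∃ i : V, (∀ j : V, closedNbhd G j ⊆ closedNbhd G i → closedNbhd G i ⊆ closedNbhd G j) ∧
        D = {j : V | closedNbhd G i ⊆ closedNbhd G j}) := by
  have := hconn.nonempty
  exact ⟨pairwise_adj_iff_exists_subset_dominators hhom, maximal_pairwise_adj_iff hhom⟩
end

section
/- Let p > 1/2, let c = [[c₁, c₁₂],[c₁₂, c₂]] be a real positive definite 2×2 matrix, and let a₁ > −p and a₂ > −p. Then ∫∫∫_{x₁ > 0, x₂ > 0, x₁x₂ − x₁₂² > 0} x₁^{a₁} x₂^{a₂} · (det c)^p / Γ₂(p) · e^{−(c₁x₁ + c₂x₂ + 2c₁₂x₁₂)} (x₁x₂ − x₁₂²)^{p − 3/2} dx₁ dx₂ dx₁₂ = (det c)^p / (c₁^{a₁+p} c₂^{a₂+p}) · Γ(a₁+p)Γ(a₂+p)/Γ(p)² · ₂F₁(a₁+p, a₂+p; p; c₁₂²/(c₁c₂)).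 -/
open MeasureTheory Real

noncomputable section

/-- The rising factorial `(a)_n = a (a+1) ⋯ (a+n-1)`. -/
def risingFac (a : ℝ) (n : ℕ) : ℝ := ∏ i ∈ Finset.range n, (a + i)

/-- The Gauss hypergeometric function `₂F₁(a, b; c; z)`. -/
def gaussHyp (a b c z : ℝ) : ℝ :=
  ∑' n : ℕ, risingFac a n * risingFac b n / (risingFac c n * (n.factorial : ℝ)) * z ^ n

/-- The bivariate gamma function `Γ₂(p) = π^{1/2} Γ(p) Γ(p - 1/2)`. -/
def Gamma2 (p : ℝ) : ℝ := Real.pi ^ ((1 : ℝ) / 2) * Real.Gamma p * Real.Gamma (p - 1 / 2)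

/-!
Replacing `x₁₂` by `-x₁₂` leaves the domain and every factor of the integrand except
`exp (-2 c₁₂ x₁₂)` unchanged, so that factor may be replaced by
`cosh (2 c₁₂ x₁₂) = ∑ (2 c₁₂ x₁₂)^(2n) / (2n)!`. All terms are now nonnegative and may be
integrated one at a time. For fixed `x₁, x₂` the `x₁₂`-integral over `|x₁₂| < √(x₁ x₂)` of
`x₁₂^(2n) (x₁ x₂ - x₁₂²)^(p - 3/2)` is the Beta integral `(x₁ x₂)^(n + p - 1) B(n + 1/2, p - 1/2)`,
after which the integrals over `x₁` and `x₂` are Gamma integrals. Legendre's duplication formula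
`Γ(n + 1/2) n! = √π (2n)! / 4ⁿ` turns the `n`-th term into the `n`-th term of the `₂F₁` series.
Since the Lebesgue integral of the nonnegative integrand is finite, the integrand is integrable.
-/

open Set ProbabilityTheory
open scoped ENNReal Nat

lemma risingFac_eq_ascPochhammer_eval (a : ℝ) (n : ℕ) :
    risingFac a n = (ascPochhammer ℝ n).eval a := by
  induction n with
  | zero => simp [risingFac]
  | succ n ih => rw [risingFac, Finset.prod_range_succ, ← risingFac, ih, ascPochhammer_succ_eval]

lemma risingFac_pos {a : ℝ} (ha : 0 < a) (n : ℕ) : 0 < risingFac a n :=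
  Finset.prod_pos fun i _ => by positivity

lemma Gamma_add_natCast {a : ℝ} (ha : 0 < a) (n : ℕ) :
    Gamma (a + n) = Gamma a * risingFac a n := by
  induction n with
  | zero => simp [risingFac]
  | succ n ih =>
    rw [risingFac, Finset.prod_range_succ, ← risingFac, Nat.cast_succ, ← add_assoc,
      Gamma_add_one (by positivity), ih]
    ring

lemma Gamma_natCast_add_half_mul_factorial (n : ℕ) :
    Gamma (n + 1 / 2) * n ! = √π * (2 * n)! / 4 ^ n := by
  have h := Gamma_mul_Gamma_add_half (n + 1 / 2)
  rw [show (n : ℝ) + 1 / 2 + 1 / 2 = n + 1 by ring, Gamma_nat_eq_factorial,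
    show 2 * ((n : ℝ) + 1 / 2) = (2 * n : ℕ) + 1 by push_cast; ring, Gamma_nat_eq_factorial,
    show (1 : ℝ) - ((2 * n : ℕ) + 1) = -(2 * n : ℕ) by ring, rpow_neg two_pos.le, rpow_natCast,
    pow_mul] at h
  rw [h]
  norm_num
  ring

lemma Gamma2_pos {p : ℝ} (hp : 1 / 2 < p) : 0 < Gamma2 p := by
  have := Gamma_pos_of_pos (by linarith : 0 < p)
  have := Gamma_pos_of_pos (by linarith : 0 < p - 1 / 2)
  unfold Gamma2
  positivity

lemma summable_gaussHyp {a b c z : ℝ} (ha : 0 < a) (hb : 0 < b) (hc : 0 < c) (hz : |z| < 1) :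
    Summable fun n : ℕ => risingFac a n * risingFac b n / (risingFac c n * n !) * z ^ n := by
  have hradius := ordinaryHypergeometricSeries_radius_eq_one (𝔸 := ℝ) a b c fun k => by
    have : (0 : ℝ) ≤ k := k.cast_nonneg
    exact ⟨by linarith, by linarith, by linarith⟩
  have hmem : z ∈ Metric.eball (0 : ℝ) (ordinaryHypergeometricSeries ℝ a b c).radius := by
    rwa [hradius, Metric.mem_eball, edist_zero_right, Real.enorm_eq_ofReal_abs,
      ENNReal.ofReal_lt_one]
  refine ((ordinaryHypergeometricSeries ℝ a b c).summable_norm_apply hmem).of_norm.congr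
    fun n => ?_
  rw [ordinaryHypergeometricSeries_apply_eq, smul_eq_mul]
  simp only [risingFac_eq_ascPochhammer_eval]
  ring

lemma gaussHyp_term_nonneg {a b c z : ℝ} (ha : 0 < a) (hb : 0 < b) (hc : 0 < c) (hz : 0 ≤ z)
    (n : ℕ) : 0 ≤ risingFac a n * risingFac b n / (risingFac c n * n !) * z ^ n := by
  have := risingFac_pos ha n
  have := risingFac_pos hb n
  have := risingFac_pos hc n
  positivity

lemma gaussHyp_nonneg {a b c z : ℝ} (ha : 0 < a) (hb : 0 < b) (hc : 0 < c) (hz : 0 ≤ z) :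
    0 ≤ gaussHyp a b c z :=
  tsum_nonneg (gaussHyp_term_nonneg ha hb hc hz)

lemma tsum_ofReal_mul_gaussHyp_term {C a b c z : ℝ} (hC : 0 ≤ C) (ha : 0 < a) (hb : 0 < b)
    (hc : 0 < c) (hz₀ : 0 ≤ z) (hz : |z| < 1) :
    ∑' n : ℕ, ENNReal.ofReal (C * (risingFac a n * risingFac b n / (risingFac c n * n !) * z ^ n)) =
      ENNReal.ofReal (C * gaussHyp a b c z) := by
  have hterm := fun n => mul_nonneg hC (gaussHyp_term_nonneg ha hb hc hz₀ n)
  rw [← ENNReal.ofReal_tsum_of_nonneg hterm ((summable_gaussHyp ha hb hc hz).mul_left C),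
    tsum_mul_left, gaussHyp]

lemma lintegral_rpow_mul_one_sub_rpow {α β : ℝ} (hα : 0 < α) (hβ : 0 < β) :
    ∫⁻ x in Ioo (0 : ℝ) 1, ENNReal.ofReal (x ^ (α - 1) * (1 - x) ^ (β - 1)) =
      ENNReal.ofReal (beta α β) := by
  have h := lintegral_betaPDF_eq_one hα hβ
  have hB := beta_pos hα hβ
  rw [lintegral_betaPDF] at h
  simp_rw [mul_assoc, ENNReal.ofReal_mul (one_div_pos.2 hB).le] at h
  rw [lintegral_const_mul' _ _ ENNReal.ofReal_ne_top, one_div,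
    ENNReal.ofReal_inv_of_pos hB] at h
  rw [ENNReal.eq_inv_of_mul_eq_one_left ((mul_comm _ _).trans h), inv_inv]

lemma lintegral_rpow_mul_exp_neg_mul {a r : ℝ} (ha : 0 < a) (hr : 0 < r) :
    ∫⁻ x in Ioi (0 : ℝ), ENNReal.ofReal (x ^ (a - 1) * exp (-(r * x))) =
      ENNReal.ofReal ((1 / r) ^ a * Gamma a) := by
  have hI := integral_rpow_mul_exp_neg_mul_Ioi ha hr
  rw [← hI, ofReal_integral_eq_lintegral_ofReal]
  · exact Integrable.of_integral_ne_zero (by rw [hI]; positivity)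
  · exact ae_restrict_of_forall_mem measurableSet_Ioi fun x hx => by
      have := rpow_nonneg (le_of_lt hx) (a - 1)
      positivity

lemma lintegral_Ioo_neg_eq_two_mul {g : ℝ → ℝ≥0∞} (hg : ∀ t, g (-t) = g t) {r : ℝ}
    (hr : 0 < r) : ∫⁻ t in Ioo (-r) r, g t = 2 * ∫⁻ t in Ioo 0 r, g t := by
  have hneg : ∫⁻ t in Ioo (-r) 0, g t = ∫⁻ t in Ioo 0 r, g t := by
    rw [← (Measure.measurePreserving_neg (volume : Measure ℝ)).setLIntegral_comp_preimage_emb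
      (Homeomorph.neg ℝ).measurableEmbedding]
    simp [hg]
  rw [← Ioo_union_Ico_eq_Ioo (neg_lt_zero.2 hr) hr.le, lintegral_union measurableSet_Ico
      ((Iio_disjoint_Ici le_rfl).mono Ioo_subset_Iio_self Ico_subset_Ici_self),
    hneg, setLIntegral_congr Ioo_ae_eq_Ico.symm, two_mul]

lemma sqrt_mul_image_Ioo {s : ℝ} (hs : 0 < s) : (fun x => √(s * x)) '' Ioo 0 1 = Ioo 0 √s := by
  ext t
  constructor
  · rintro ⟨x, ⟨hx₀, hx₁⟩, rfl⟩
    exact ⟨by positivity, sqrt_lt_sqrt (by positivity) (by nlinarith)⟩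
  · rintro ⟨ht₀, hts⟩
    refine ⟨t ^ 2 / s, ⟨by positivity, (div_lt_one hs).2 ((lt_sqrt ht₀.le).1 hts)⟩, ?_⟩
    show √(s * (t ^ 2 / s)) = t
    rw [mul_div_cancel₀ _ hs.ne', sqrt_sq ht₀.le]

lemma lintegral_rpow_mul_sub_sq_rpow {α β s : ℝ} (hα : 0 < α) (hβ : 0 < β) (hs : 0 < s) :
    ∫⁻ t in Ioo 0 √s, ENNReal.ofReal (t ^ (2 * α - 1) * (s - t ^ 2) ^ (β - 1)) =
      ENNReal.ofReal (s ^ (α + β - 1) / 2 * beta α β) := by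
  have hderiv : ∀ x ∈ Ioo (0 : ℝ) 1,
      HasDerivWithinAt (fun x => √(s * x)) (s / (2 * √(s * x))) (Ioo 0 1) x := fun x hx =>
    (((hasDerivAt_id x).const_mul s).sqrt (by simp [hs.ne', hx.1.ne'])).hasDerivWithinAt.congr_deriv
      (by simp)
  have hinj : InjOn (fun x => √(s * x)) (Ioo 0 1) := fun x hx y hy hxy => by
    have := congrArg (· ^ 2) hxy
    simp only [sq_sqrt (mul_pos hs hx.1).le, sq_sqrt (mul_pos hs hy.1).le] at this
    exact mul_left_cancel₀ hs.ne' this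
  have hpoint : ∀ x ∈ Ioo (0 : ℝ) 1,
      ENNReal.ofReal |s / (2 * √(s * x))| *
          ENNReal.ofReal (√(s * x) ^ (2 * α - 1) * (s - √(s * x) ^ 2) ^ (β - 1)) =
        ENNReal.ofReal (s ^ (α + β - 1) / 2) *
          ENNReal.ofReal (x ^ (α - 1) * (1 - x) ^ (β - 1)) := by
    rintro x ⟨hx₀, hx₁⟩
    have hsx : 0 < s * x := mul_pos hs hx₀
    rw [← ENNReal.ofReal_mul (abs_nonneg _), ← ENNReal.ofReal_mul (by positivity)]
    congr 1
    rw [abs_of_pos (by positivity), sq_sqrt hsx.le, sqrt_eq_rpow, ← rpow_mul hsx.le,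
      show 1 / 2 * (2 * α - 1) = (α - 1) + 1 / 2 by ring, rpow_add hsx,
      show s - s * x = s * (1 - x) by ring, mul_rpow hs.le hx₀.le, mul_rpow hs.le hx₀.le,
      mul_rpow hs.le (by linarith : 0 ≤ 1 - x),
      show α + β - 1 = 1 + (α - 1) + (β - 1) by ring, rpow_add hs, rpow_add hs, rpow_one]
    field_simp
  rw [← sqrt_mul_image_Ioo hs, lintegral_image_eq_lintegral_abs_deriv_mul measurableSet_Ioo
      hderiv hinj, setLIntegral_congr_fun measurableSet_Ioo hpoint,
    lintegral_const_mul' _ _ ENNReal.ofReal_ne_top, lintegral_rpow_mul_one_sub_rpow hα hβ,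
    ← ENNReal.ofReal_mul (by positivity)]

lemma lintegral_pow_mul_sub_sq_rpow (n : ℕ) {β s : ℝ} (hβ : 0 < β) (hs : 0 < s) :
    ∫⁻ t in Ioo (-√s) √s, ENNReal.ofReal (t ^ (2 * n) * (s - t ^ 2) ^ (β - 1)) =
      ENNReal.ofReal (s ^ (n + β - 1 / 2) * beta (n + 1 / 2) β) := by
  have h := lintegral_rpow_mul_sub_sq_rpow (α := n + 1 / 2) (by positivity) hβ hs
  rw [show 2 * ((n : ℝ) + 1 / 2) - 1 = (2 * n : ℕ) by push_cast; ring,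
    show (n : ℝ) + 1 / 2 + β - 1 = n + β - 1 / 2 by ring] at h
  simp_rw [rpow_natCast] at h
  rw [lintegral_Ioo_neg_eq_two_mul (fun t => by rw [pow_mul, neg_sq, ← pow_mul]) (sqrt_pos.2 hs),
    h, ← ENNReal.ofReal_ofNat 2, ← ENNReal.ofReal_mul zero_le_two]
  ring_nf

lemma setLIntegral_prod_of_subset_prod_univ {α β : Type*} [MeasurableSpace α]
    [MeasurableSpace β] {μ : Measure α} {ν : Measure β} [SFinite ν] {s : Set (α × β)}
    (hs : MeasurableSet s) {A : Set α} (hsA : s ⊆ A ×ˢ univ) {f : α × β → ℝ≥0∞}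
    (hf : Measurable f) :
    ∫⁻ z in s, f z ∂μ.prod ν = ∫⁻ x in A, ∫⁻ y in Prod.mk x ⁻¹' s, f (x, y) ∂ν ∂μ := by
  have hslice : ∀ x, ∫⁻ y, s.indicator f (x, y) ∂ν = ∫⁻ y in Prod.mk x ⁻¹' s, f (x, y) ∂ν :=
    fun x => by
      rw [← lintegral_indicator (measurable_prodMk_left hs)]
      rfl
  rw [← lintegral_indicator hs, lintegral_prod _ (hf.indicator hs).aemeasurable]
  simp_rw [hslice]
  refine (setLIntegral_eq_of_support_subset fun x hx => ?_).symm
  by_contra hxA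
  refine hx (setLIntegral_measure_zero _ _ ?_)
  rw [(eq_empty_of_forall_notMem fun y hy => hxA (hsA (mem_preimage.1 hy)).1 :
    Prod.mk x ⁻¹' s = ∅), measure_empty]

lemma integrableOn_and_setIntegral_eq_of_setLIntegral_ofReal {α : Type*} [MeasurableSpace α]
    {μ : Measure α} {s : Set α} (hs : MeasurableSet s) {f : α → ℝ}
    (hf : AEStronglyMeasurable f (μ.restrict s)) (hf_nonneg : ∀ x ∈ s, 0 ≤ f x) {T : ℝ}
    (hT : 0 ≤ T) (h : ∫⁻ x in s, ENNReal.ofReal (f x) ∂μ = ENNReal.ofReal T) :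
    IntegrableOn f s μ ∧ ∫ x in s, f x ∂μ = T := by
  have hf_ae : 0 ≤ᵐ[μ.restrict s] f := ae_restrict_of_forall_mem hs hf_nonneg
  refine ⟨⟨hf, ?_⟩, ?_⟩
  · rw [hasFiniteIntegral_iff_ofReal hf_ae, h]
    exact ENNReal.ofReal_lt_top
  · rw [integral_eq_lintegral_of_nonneg_ae hf_ae hf, h, ENNReal.toReal_ofReal hT]

/-- The point `(x₁, x₂, x₁₂)` stands for the symmetric matrix `[[x₁, x₁₂], [x₁₂, x₂]]`. -/
def posDefCone : Set (ℝ × ℝ × ℝ) := {x | 0 < x.1 ∧ 0 < x.2.1 ∧ 0 < x.1 * x.2.1 - x.2.2 ^ 2}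

lemma measurableSet_posDefCone : MeasurableSet posDefCone :=
  (measurableSet_lt measurable_const measurable_fst).inter
    ((measurableSet_lt measurable_const measurable_snd.fst).inter
      (measurableSet_lt measurable_const (g := fun x : ℝ × ℝ × ℝ => x.1 * x.2.1 - x.2.2 ^ 2)
        (by fun_prop)))

lemma lintegral_posDefCone {h : ℝ × ℝ × ℝ → ℝ≥0∞} (hh : Measurable h) :
    ∫⁻ x in posDefCone, h x =
      ∫⁻ x₁ in Ioi 0, ∫⁻ x₂ in Ioi 0, ∫⁻ t in Ioo (-√(x₁ * x₂)) √(x₁ * x₂), h (x₁, x₂, t) := by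
  rw [Measure.volume_eq_prod, setLIntegral_prod_of_subset_prod_univ measurableSet_posDefCone
    (fun x hx => ⟨hx.1, trivial⟩) hh]
  refine setLIntegral_congr_fun measurableSet_Ioi fun x₁ hx₁ => ?_
  rw [Measure.volume_eq_prod, setLIntegral_prod_of_subset_prod_univ
    (measurable_prodMk_left measurableSet_posDefCone) (fun y hy => ⟨hy.2.1, trivial⟩)
    (f := fun y => h (x₁, y)) (hh.comp measurable_prodMk_left)]
  refine setLIntegral_congr_fun measurableSet_Ioi fun x₂ hx₂ => ?_
  congr 2
  ext t
  simp only [mem_preimage, posDefCone, mem_ofPred_eq, mem_Ioi.1 hx₁, mem_Ioi.1 hx₂, true_and,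
    sub_pos, mem_Ioo, ← abs_lt]
  rw [lt_sqrt (abs_nonneg t), sq_abs]

lemma lintegral_posDefCone_comp_neg (h : ℝ × ℝ × ℝ → ℝ≥0∞) :
    ∫⁻ x in posDefCone, h (x.1, x.2.1, -x.2.2) = ∫⁻ x in posDefCone, h x := by
  have hν : MeasurePreserving (Prod.map id (Prod.map id Neg.neg) : ℝ × ℝ × ℝ → ℝ × ℝ × ℝ) := by
    simpa only [← Measure.volume_eq_prod] using (MeasurePreserving.id (volume : Measure ℝ)).prod
      ((MeasurePreserving.id (volume : Measure ℝ)).prod (Measure.measurePreserving_neg volume))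
  have hemb : MeasurableEmbedding (Prod.map id (Prod.map id Neg.neg) : ℝ × ℝ × ℝ → ℝ × ℝ × ℝ) :=
    ((MeasurableEquiv.refl ℝ).prodCongr
      ((MeasurableEquiv.refl ℝ).prodCongr (MeasurableEquiv.neg ℝ))).measurableEmbedding
  have hpre : Prod.map id (Prod.map id Neg.neg) ⁻¹' posDefCone = posDefCone := by
    ext x
    simp [posDefCone]
  rw [← hν.setLIntegral_comp_preimage_emb hemb h, hpre]
  rfl

lemma lintegral_posDefCone_exp_eq_cosh {g : ℝ × ℝ × ℝ → ℝ} (hg : Measurable g)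
    (hg_nonneg : ∀ x ∈ posDefCone, 0 ≤ g x) (hg_even : ∀ x, g (x.1, x.2.1, -x.2.2) = g x)
    (b : ℝ) :
    ∫⁻ x in posDefCone, ENNReal.ofReal (g x * exp (-(b * x.2.2))) =
      ∫⁻ x in posDefCone, ENNReal.ofReal (g x * cosh (b * x.2.2)) := by
  set h : ℝ × ℝ × ℝ → ℝ≥0∞ := fun x => ENNReal.ofReal (g x * exp (-(b * x.2.2)))
  have hsplit : ∀ x ∈ posDefCone, ENNReal.ofReal (g x * cosh (b * x.2.2)) =
      h x / 2 + h (x.1, x.2.1, -x.2.2) / 2 := by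
    intro x hx
    have := hg_nonneg x hx
    simp only [h, hg_even, mul_neg, neg_neg, cosh_eq]
    rw [← ENNReal.add_div, ← ENNReal.ofReal_add (by positivity) (by positivity),
      ← ENNReal.ofReal_ofNat 2, ← ENNReal.ofReal_div_of_pos two_pos]
    ring_nf
  rw [setLIntegral_congr_fun measurableSet_posDefCone hsplit,
    lintegral_add_left ((by fun_prop : Measurable h).div_const 2)]
  simp_rw [ENNReal.div_eq_inv_mul]
  rw [lintegral_const_mul' _ _ (by simp), lintegral_const_mul' _ _ (by simp),
    lintegral_posDefCone_comp_neg h, ← mul_add, ← two_mul, ← mul_assoc,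
    ENNReal.inv_mul_cancel two_ne_zero ENNReal.ofNat_ne_top, one_mul]

lemma lintegral_posDefCone_moment_slice {p c₁ c₂ a₁ a₂ x₁ x₂ : ℝ} (hp : 1 / 2 < p) (n : ℕ)
    (hx₁ : 0 < x₁) (hx₂ : 0 < x₂) :
    ∫⁻ t in Ioo (-√(x₁ * x₂)) √(x₁ * x₂), ENNReal.ofReal (x₁ ^ a₁ * exp (-(c₁ * x₁)) *
        (x₂ ^ a₂ * exp (-(c₂ * x₂))) * (t ^ (2 * n) * (x₁ * x₂ - t ^ 2) ^ (p - 3 / 2))) =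
      ENNReal.ofReal (beta (n + 1 / 2) (p - 1 / 2)) *
        ENNReal.ofReal (x₁ ^ (a₁ + p + n - 1) * exp (-(c₁ * x₁))) *
        ENNReal.ofReal (x₂ ^ (a₂ + p + n - 1) * exp (-(c₂ * x₂))) := by
  have hB : 0 < beta (n + 1 / 2) (p - 1 / 2) := beta_pos (by positivity) (by linarith)
  have hP : 0 ≤ x₁ ^ a₁ * exp (-(c₁ * x₁)) * (x₂ ^ a₂ * exp (-(c₂ * x₂))) := by positivity
  have hg₁ : 0 ≤ x₁ ^ (a₁ + p + n - 1) * exp (-(c₁ * x₁)) := by positivity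
  simp_rw [ENNReal.ofReal_mul hP]
  rw [lintegral_const_mul' _ _ ENNReal.ofReal_ne_top, show p - 3 / 2 = p - 1 / 2 - 1 by ring,
    lintegral_pow_mul_sub_sq_rpow n (by linarith) (mul_pos hx₁ hx₂), ← ENNReal.ofReal_mul hP,
    ← ENNReal.ofReal_mul hB.le, ← ENNReal.ofReal_mul (mul_nonneg hB.le hg₁)]
  congr 1
  rw [mul_rpow hx₁.le hx₂.le, show a₁ + p + n - 1 = a₁ + (n + (p - 1 / 2) - 1 / 2) by ring,
    show a₂ + p + n - 1 = a₂ + (n + (p - 1 / 2) - 1 / 2) by ring, rpow_add hx₁, rpow_add hx₂]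
  ring

lemma lintegral_posDefCone_moment {p c₁ c₂ a₁ a₂ : ℝ} (hp : 1 / 2 < p) (hc₁ : 0 < c₁)
    (hc₂ : 0 < c₂) (ha₁ : -p < a₁) (ha₂ : -p < a₂) (n : ℕ) :
    ∫⁻ x in posDefCone, ENNReal.ofReal (x.1 ^ a₁ * exp (-(c₁ * x.1)) *
        (x.2.1 ^ a₂ * exp (-(c₂ * x.2.1))) *
        (x.2.2 ^ (2 * n) * (x.1 * x.2.1 - x.2.2 ^ 2) ^ (p - 3 / 2))) =
      ENNReal.ofReal (beta (n + 1 / 2) (p - 1 / 2) *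
        ((1 / c₁) ^ (a₁ + p + n) * Gamma (a₁ + p + n)) *
        ((1 / c₂) ^ (a₂ + p + n) * Gamma (a₂ + p + n))) := by
  have hB : 0 < beta (n + 1 / 2) (p - 1 / 2) := beta_pos (by positivity) (by linarith)
  have hn : (0 : ℝ) ≤ n := n.cast_nonneg
  have hσ₁ : 0 < a₁ + p + n := by linarith
  have hσ₂ : 0 < a₂ + p + n := by linarith
  rw [lintegral_posDefCone (by fun_prop)]
  calc _ = ∫⁻ x₁ in Ioi 0, ∫⁻ x₂ in Ioi 0,
        ENNReal.ofReal (beta (n + 1 / 2) (p - 1 / 2)) *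
          ENNReal.ofReal (x₁ ^ (a₁ + p + n - 1) * exp (-(c₁ * x₁))) *
          ENNReal.ofReal (x₂ ^ (a₂ + p + n - 1) * exp (-(c₂ * x₂))) :=
        setLIntegral_congr_fun measurableSet_Ioi fun x₁ hx₁ =>
          setLIntegral_congr_fun measurableSet_Ioi fun x₂ hx₂ =>
            lintegral_posDefCone_moment_slice hp n hx₁ hx₂
    _ = _ := by
      simp_rw [lintegral_const_mul' _ _ (ENNReal.mul_ne_top ENNReal.ofReal_ne_top
        ENNReal.ofReal_ne_top)]
      rw [lintegral_mul_const' _ _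
          (lintegral_rpow_mul_exp_neg_mul hσ₂ hc₂ ▸ ENNReal.ofReal_ne_top),
        lintegral_const_mul' _ _ ENNReal.ofReal_ne_top, lintegral_rpow_mul_exp_neg_mul hσ₁ hc₁,
        lintegral_rpow_mul_exp_neg_mul hσ₂ hc₂, ← ENNReal.ofReal_mul hB.le,
        ← ENNReal.ofReal_mul (by positivity)]

lemma ofReal_mul_cosh_eq_tsum {A : ℝ} (hA : 0 ≤ A) (y : ℝ) :
    ENNReal.ofReal (A * cosh y) = ∑' n : ℕ, ENNReal.ofReal (A * (y ^ (2 * n) / (2 * n)!)) := by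
  have h := (hasSum_cosh y).mul_left A
  rw [← h.tsum_eq, ENNReal.ofReal_tsum_of_nonneg
    (fun n => mul_nonneg hA (div_nonneg ((even_two_mul n).pow_nonneg y) (Nat.cast_nonneg _)))
    h.summable]

lemma lintegral_posDefCone_cosh {p c₁ c₂ a₁ a₂ : ℝ} (hp : 1 / 2 < p) (hc₁ : 0 < c₁)
    (hc₂ : 0 < c₂) (ha₁ : -p < a₁) (ha₂ : -p < a₂) (d : ℝ) :
    ∫⁻ x in posDefCone, ENNReal.ofReal (x.1 ^ a₁ * exp (-(c₁ * x.1)) *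
        (x.2.1 ^ a₂ * exp (-(c₂ * x.2.1))) * (x.1 * x.2.1 - x.2.2 ^ 2) ^ (p - 3 / 2) *
        cosh (d * x.2.2)) =
      ∑' n : ℕ, ENNReal.ofReal (d ^ (2 * n) / (2 * n)! * (beta (n + 1 / 2) (p - 1 / 2) *
        ((1 / c₁) ^ (a₁ + p + n) * Gamma (a₁ + p + n)) *
        ((1 / c₂) ^ (a₂ + p + n) * Gamma (a₂ + p + n)))) := by
  have hexpand : ∀ x ∈ posDefCone, ENNReal.ofReal (x.1 ^ a₁ * exp (-(c₁ * x.1)) *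
        (x.2.1 ^ a₂ * exp (-(c₂ * x.2.1))) * (x.1 * x.2.1 - x.2.2 ^ 2) ^ (p - 3 / 2) *
        cosh (d * x.2.2)) =
      ∑' n : ℕ, ENNReal.ofReal (d ^ (2 * n) / (2 * n)!) * ENNReal.ofReal (x.1 ^ a₁ *
        exp (-(c₁ * x.1)) * (x.2.1 ^ a₂ * exp (-(c₂ * x.2.1))) *
        (x.2.2 ^ (2 * n) * (x.1 * x.2.1 - x.2.2 ^ 2) ^ (p - 3 / 2))) := by
    rintro x ⟨hx₁, hx₂, hx⟩
    have := rpow_nonneg hx₁.le a₁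
    have := rpow_nonneg hx₂.le a₂
    have := rpow_nonneg hx.le (p - 3 / 2)
    rw [ofReal_mul_cosh_eq_tsum (by positivity)]
    congr 1 with n
    rw [← ENNReal.ofReal_mul (div_nonneg ((even_two_mul n).pow_nonneg d) (Nat.cast_nonneg _)),
      mul_pow]
    ring_nf
  rw [setLIntegral_congr_fun measurableSet_posDefCone hexpand,
    lintegral_tsum fun n => by fun_prop]
  congr 1 with n
  rw [lintegral_const_mul' _ _ ENNReal.ofReal_ne_top,
    lintegral_posDefCone_moment hp hc₁ hc₂ ha₁ ha₂ n,
    ← ENNReal.ofReal_mul (div_nonneg ((even_two_mul n).pow_nonneg d) (Nat.cast_nonneg _))]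

lemma coshSeries_term_eq_gaussHyp_term {p c₁ c₂ c₁₂ a₁ a₂ : ℝ} (hp : 1 / 2 < p) (hc₁ : 0 < c₁)
    (hc₂ : 0 < c₂) (ha₁ : -p < a₁) (ha₂ : -p < a₂) (n : ℕ) :
    (c₁ * c₂ - c₁₂ ^ 2) ^ p / Gamma2 p * ((2 * c₁₂) ^ (2 * n) / (2 * n)! *
      (beta (n + 1 / 2) (p - 1 / 2) * ((1 / c₁) ^ (a₁ + p + n) * Gamma (a₁ + p + n)) *
        ((1 / c₂) ^ (a₂ + p + n) * Gamma (a₂ + p + n)))) =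
    (c₁ * c₂ - c₁₂ ^ 2) ^ p / (c₁ ^ (a₁ + p) * c₂ ^ (a₂ + p)) *
      (Gamma (a₁ + p) * Gamma (a₂ + p) / Gamma p ^ 2) *
      (risingFac (a₁ + p) n * risingFac (a₂ + p) n / (risingFac p n * n !) *
        (c₁₂ ^ 2 / (c₁ * c₂)) ^ n) := by
  have hp₀ : 0 < p := by linarith
  have hhalf : Gamma (n + 1 / 2) = √π * (2 * n)! / (4 ^ n * n !) := by
    rw [eq_div_iff (by positivity), mul_left_comm, Gamma_natCast_add_half_mul_factorial]
    field_simp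
  have hrpow : ∀ {c : ℝ}, 0 < c → ∀ σ : ℝ, (1 / c) ^ (σ + n) = 1 / (c ^ σ * c ^ n) :=
    fun hc σ => by rw [div_rpow zero_le_one hc.le, one_rpow, rpow_add hc, rpow_natCast]
  rw [beta, show (n : ℝ) + 1 / 2 + (p - 1 / 2) = p + n by ring, Gamma_add_natCast hp₀,
    Gamma_add_natCast (by linarith : 0 < a₁ + p), Gamma_add_natCast (by linarith : 0 < a₂ + p),
    hhalf, hrpow hc₁, hrpow hc₂, Gamma2, ← sqrt_eq_rpow, pow_mul, mul_pow, div_pow, mul_pow]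
  have := (risingFac_pos hp₀ n).ne'
  have := (Gamma_pos_of_pos hp₀).ne'
  have hG := (Gamma_pos_of_pos (by linarith : 0 < p - 1 / 2)).ne'
  -- otherwise `field_simp` rewrites the argument `p - 1 / 2` and no longer cancels `Gamma`
  generalize Gamma (p - 1 / 2) = G at hG ⊢
  field_simp
  ring

lemma lintegral_posDefCone_wishart {p c₁ c₂ c₁₂ a₁ a₂ : ℝ} (hp : 1 / 2 < p) (hc₁ : 0 < c₁)
    (hc₂ : 0 < c₂) (hdet : 0 < c₁ * c₂ - c₁₂ ^ 2) (ha₁ : -p < a₁) (ha₂ : -p < a₂) :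
    ∫⁻ x in posDefCone, ENNReal.ofReal (x.1 ^ a₁ * x.2.1 ^ a₂ *
        ((c₁ * c₂ - c₁₂ ^ 2) ^ p / Gamma2 p) *
        exp (-(c₁ * x.1 + c₂ * x.2.1 + 2 * c₁₂ * x.2.2)) *
        (x.1 * x.2.1 - x.2.2 ^ 2) ^ (p - 3 / 2)) =
      ENNReal.ofReal ((c₁ * c₂ - c₁₂ ^ 2) ^ p / (c₁ ^ (a₁ + p) * c₂ ^ (a₂ + p)) *
        (Gamma (a₁ + p) * Gamma (a₂ + p) / Gamma p ^ 2) *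
        gaussHyp (a₁ + p) (a₂ + p) p (c₁₂ ^ 2 / (c₁ * c₂))) := by
  set K := (c₁ * c₂ - c₁₂ ^ 2) ^ p / Gamma2 p
  set C := (c₁ * c₂ - c₁₂ ^ 2) ^ p / (c₁ ^ (a₁ + p) * c₂ ^ (a₂ + p)) *
    (Gamma (a₁ + p) * Gamma (a₂ + p) / Gamma p ^ 2)
  have hK : 0 ≤ K := div_nonneg (rpow_nonneg hdet.le p) (Gamma2_pos hp).le
  set g : ℝ × ℝ × ℝ → ℝ := fun x => x.1 ^ a₁ * exp (-(c₁ * x.1)) *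
    (x.2.1 ^ a₂ * exp (-(c₂ * x.2.1))) * (x.1 * x.2.1 - x.2.2 ^ 2) ^ (p - 3 / 2)
  have hfactor : ∀ x : ℝ × ℝ × ℝ, x.1 ^ a₁ * x.2.1 ^ a₂ * K *
      exp (-(c₁ * x.1 + c₂ * x.2.1 + 2 * c₁₂ * x.2.2)) * (x.1 * x.2.1 - x.2.2 ^ 2) ^ (p - 3 / 2) =
      K * (g x * exp (-((2 * c₁₂) * x.2.2))) := fun x => by
    simp only [g, neg_add, exp_add]
    ring
  have hg_nonneg : ∀ x ∈ posDefCone, 0 ≤ g x := fun x ⟨hx₁, hx₂, hx⟩ => by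
    have := rpow_nonneg hx₁.le a₁
    have := rpow_nonneg hx₂.le a₂
    have := rpow_nonneg hx.le (p - 3 / 2)
    positivity
  simp_rw [hfactor, ENNReal.ofReal_mul hK]
  rw [lintegral_const_mul' _ _ ENNReal.ofReal_ne_top,
    lintegral_posDefCone_exp_eq_cosh (by fun_prop) hg_nonneg (fun x => by simp [g]),
    lintegral_posDefCone_cosh hp hc₁ hc₂ ha₁ ha₂, ← ENNReal.tsum_mul_left]
  simp_rw [← ENNReal.ofReal_mul hK, K, coshSeries_term_eq_gaussHyp_term hp hc₁ hc₂ ha₁ ha₂]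
  have hz : |c₁₂ ^ 2 / (c₁ * c₂)| < 1 := by
    rw [abs_of_nonneg (by positivity), div_lt_one (by positivity)]
    linarith
  have hC : 0 ≤ C := by
    have := rpow_nonneg hdet.le p
    have := Gamma_pos_of_pos (by linarith : 0 < a₁ + p)
    have := Gamma_pos_of_pos (by linarith : 0 < a₂ + p)
    positivity
  exact tsum_ofReal_mul_gaussHyp_term hC (by linarith) (by linarith) (by linarith)
    (by positivity) hz

theorem statement10 (p c₁ c₂ c₁₂ a₁ a₂ : ℝ) (hp : 1 / 2 < p)
    (hc : (Matrix.of ![![c₁, c₁₂], ![c₁₂, c₂]]).PosDef)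
    (ha₁ : -p < a₁) (ha₂ : -p < a₂) :
    IntegrableOn
      (fun x : ℝ × ℝ × ℝ =>
        x.1 ^ a₁ * x.2.1 ^ a₂ *
          ((c₁ * c₂ - c₁₂ ^ 2) ^ p / Gamma2 p) *
          Real.exp (-(c₁ * x.1 + c₂ * x.2.1 + 2 * c₁₂ * x.2.2)) *
          (x.1 * x.2.1 - x.2.2 ^ 2) ^ (p - 3 / 2))
      {x : ℝ × ℝ × ℝ | 0 < x.1 ∧ 0 < x.2.1 ∧ 0 < x.1 * x.2.1 - x.2.2 ^ 2} volume ∧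
    ∫ x : ℝ × ℝ × ℝ in
        {x : ℝ × ℝ × ℝ | 0 < x.1 ∧ 0 < x.2.1 ∧ 0 < x.1 * x.2.1 - x.2.2 ^ 2},
        x.1 ^ a₁ * x.2.1 ^ a₂ *
          ((c₁ * c₂ - c₁₂ ^ 2) ^ p / Gamma2 p) *
          Real.exp (-(c₁ * x.1 + c₂ * x.2.1 + 2 * c₁₂ * x.2.2)) *
          (x.1 * x.2.1 - x.2.2 ^ 2) ^ (p - 3 / 2)
      = (c₁ * c₂ - c₁₂ ^ 2) ^ p / (c₁ ^ (a₁ + p) * c₂ ^ (a₂ + p)) *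
          (Real.Gamma (a₁ + p) * Real.Gamma (a₂ + p) / Real.Gamma p ^ 2) *
          gaussHyp (a₁ + p) (a₂ + p) p (c₁₂ ^ 2 / (c₁ * c₂)) := by
  have hc₁ : 0 < c₁ := by simpa using hc.diag_pos (i := 0)
  have hc₂ : 0 < c₂ := by simpa using hc.diag_pos (i := 1)
  have hdet : 0 < c₁ * c₂ - c₁₂ ^ 2 := by simpa [Matrix.det_fin_two_of, sq] using hc.det_pos
  have := rpow_nonneg hdet.le p
  have := Gamma2_pos hp
  refine integrableOn_and_setIntegral_eq_of_setLIntegral_ofReal measurableSet_posDefCone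
    (by fun_prop) (fun x ⟨hx₁, hx₂, hx⟩ => ?_) ?_
    (lintegral_posDefCone_wishart hp hc₁ hc₂ hdet ha₁ ha₂)
  · have := rpow_nonneg hx₁.le a₁
    have := rpow_nonneg hx₂.le a₂
    have := rpow_nonneg hx.le (p - 3 / 2)
    positivity
  · have := Gamma_pos_of_pos (by linarith : 0 < a₁ + p)
    have := Gamma_pos_of_pos (by linarith : 0 < a₂ + p)
    have := gaussHyp_nonneg (by linarith : 0 < a₁ + p) (by linarith : 0 < a₂ + p)
      (by linarith : 0 < p) (by positivity : 0 ≤ c₁₂ ^ 2 / (c₁ * c₂))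
    positivity

end
end
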